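/- arXiv:1606.00542 — 4 statements merged into one kernel-verified Lean document; each statement's English description precedes it below -/
import Mathlib

section
/- Let $\lambda$ be a partition of $n$, $(\alpha|\beta)$ a bicomposition of $n$, and $(\tilde\alpha|\tilde\beta)$ obtained by rearranging the parts of $\alpha$ and of $\beta$. Then $|\mathscr{T}_{\mathrm{sstd}}(\lambda,(\tilde\alpha|\tilde\beta))| = |\mathscr{T}_{\mathrm{sstd}}(\lambda,(\alpha|\beta))|$. -/
namespace SignedYoung
open Equiv Finset
open scoped Classical

abbrev Sym (n : ℕ) := Equiv.Perm (Fin n)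

/-- Index of the block of the composition `γ` containing position `i` (0-based). -/
def blockOf (γ : List ℕ) (i : ℕ) : ℕ :=
  (List.range γ.length).countP (fun j => decide ((γ.take (j + 1)).sum ≤ i))

/-- The Young subgroup of `Sym n` associated to the composition `γ`. -/
def youngSubgroup (n : ℕ) (γ : List ℕ) : Subgroup (Sym n) where
  carrier := {σ | ∀ i : Fin n, blockOf γ (σ i) = blockOf γ i}
  one_mem' := by intro i; simp
  mul_mem' := by
    intro a b ha hb i
    simp only [Equiv.Perm.mul_apply]
    rw [ha, hb]
  inv_mem' := by
    intro a ha i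
    have h := ha (a⁻¹ i)
    rw [show a (a⁻¹ i) = i from a.apply_symm_apply i] at h
    exact h.symm

/-- The subgroup `Sym_α` of the Young subgroup `Sym_{α|β}`: block-preserving permutations
fixing all points `≥ |α|`. -/
def symA (n : ℕ) (α β : List ℕ) : Set (Sym n) :=
  {σ | σ ∈ youngSubgroup n (α ++ β) ∧ ∀ i : Fin n, α.sum ≤ (i : ℕ) → σ i = i}

/-- The subgroup `Sym_β^{+|α|}`: block-preserving permutations fixing all points `< |α|`. -/
def symB (n : ℕ) (α β : List ℕ) : Set (Sym n) :=
  {σ | σ ∈ youngSubgroup n (α ++ β) ∧ ∀ i : Fin n, (i : ℕ) < α.sum → σ i = i}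

/-- Cells of the Young diagram of the composition `lam`. -/
abbrev Cell (lam : List ℕ) := (i : Fin lam.length) × Fin (lam.get i)

/-- A `lam`-tableau: a bijective labelling of the cells by `1, …, n` (here `Fin n`). -/
abbrev Tab (n : ℕ) (lam : List ℕ) := Cell lam ≃ Fin n

/-- The row stabilizer of a tableau. -/
def rowStab {n : ℕ} {lam : List ℕ} (t : Tab n lam) : Set (Sym n) :=
  {σ | ∀ a : Fin n, (t.symm (σ a)).1 = (t.symm a).1}

/-- The column stabilizer of a tableau. -/
def colStab {n : ℕ} {lam : List ℕ} (t : Tab n lam) : Set (Sym n) :=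
  {σ | ∀ a : Fin n, ((t.symm (σ a)).2 : ℕ) = ((t.symm a).2 : ℕ)}

/-- Colours `c_1 < c_2 < ⋯ < d_1 < d_2 < ⋯` (0-based). -/
abbrev Colour := Lex (ℕ ⊕ ℕ)

def cCol (k : ℕ) : Colour := toLex (Sum.inl k)

def dCol (k : ℕ) : Colour := toLex (Sum.inr k)

/-- `T` is a `lam`-tableau of type `(α|β)`: exactly `α_k` cells of colour `c_k` and
`β_k` of colour `d_k`. -/
def HasType {lam : List ℕ} (α β : List ℕ) (T : Cell lam → Colour) : Prop :=
  (∀ k : ℕ, (Finset.univ.filter fun c => T c = cCol k).card = α.getD k 0) ∧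
  (∀ k : ℕ, (Finset.univ.filter fun c => T c = dCol k).card = β.getD k 0)

/-- The colour of the number `i` under the canonical colouring by `(α|β)`. -/
def colourOfIdx (α β : List ℕ) (i : ℕ) : Colour :=
  if blockOf (α ++ β) i < α.length then cCol (blockOf (α ++ β) i)
  else dCol (blockOf (α ++ β) i - α.length)

/-- The canonical `lam`-tableau of type `(α|β)` associated to the tableau `t0`. -/
def canonT {n : ℕ} {lam : List ℕ} (t0 : Tab n lam) (α β : List ℕ) : Cell lam → Colour :=
  fun c => colourOfIdx α β (t0 c)

/-- The action `σ · T = T ∘ t0⁻¹ ∘ σ⁻¹ ∘ t0` of `Sym n` on tableaux of type `(α|β)`,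
through the fixed tableau `t0`. -/
def actT {n : ℕ} {lam : List ℕ} (t0 : Tab n lam) (σ : Sym n) (T : Cell lam → Colour) :
    Cell lam → Colour :=
  fun c => T (t0.symm (σ⁻¹ (t0 c)))

/-- `T_d = d · T_0`. -/
def TOf {n : ℕ} {lam : List ℕ} (t0 : Tab n lam) (α β : List ℕ) (d : Sym n) :
    Cell lam → Colour :=
  actT t0 d (canonT t0 α β)

def RowSemistd {lam : List ℕ} (T : Cell lam → Colour) : Prop :=
  ∀ c c' : Cell lam, c.1 = c'.1 → (c.2 : ℕ) < (c'.2 : ℕ) → T c ≤ T c'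

def ColSemistd {lam : List ℕ} (T : Cell lam → Colour) : Prop :=
  ∀ c c' : Cell lam, (c.2 : ℕ) = (c'.2 : ℕ) → c.1 < c'.1 → T c ≤ T c'

/-- Repeats in a row occur only for colours `c_k`. -/
def RowRepeatC {lam : List ℕ} (T : Cell lam → Colour) : Prop :=
  ∀ c c' : Cell lam, c.1 = c'.1 → (c.2 : ℕ) ≠ (c'.2 : ℕ) → T c = T c' → ∃ k, T c = cCol k

/-- Repeats in a column occur only for colours `d_k`. -/
def ColRepeatD {lam : List ℕ} (T : Cell lam → Colour) : Prop :=
  ∀ c c' : Cell lam, (c.2 : ℕ) = (c'.2 : ℕ) → c.1 ≠ c'.1 → T c = T c' → ∃ k, T c = dCol k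

def IsSemistd {lam : List ℕ} (T : Cell lam → Colour) : Prop :=
  RowSemistd T ∧ ColSemistd T ∧ RowRepeatC T ∧ ColRepeatD T

/-- A standard tableau: strictly increasing along rows and down columns. -/
def IsStd {n : ℕ} {lam : List ℕ} (t : Tab n lam) : Prop :=
  (∀ c c' : Cell lam, c.1 = c'.1 → (c.2 : ℕ) < (c'.2 : ℕ) → t c < t c') ∧
  (∀ c c' : Cell lam, (c.2 : ℕ) = (c'.2 : ℕ) → c.1 < c'.1 → t c < t c')

def IsPartition (n : ℕ) (lam : List ℕ) : Prop :=
  lam.Pairwise (· ≥ ·) ∧ (∀ x ∈ lam, 0 < x) ∧ lam.sum = n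

def IsBicomp (n : ℕ) (α β : List ℕ) : Prop :=
  (∀ x ∈ α, 0 < x) ∧ (∀ x ∈ β, 0 < x) ∧ α.sum + β.sum = n

/-- `𝒮 = {d : d⁻¹ R_{t0} d ∩ Sym_{α|β} ⊆ Sym_α}`. -/
def RSet {n : ℕ} {lam : List ℕ} (t0 : Tab n lam) (α β : List ℕ) : Set (Sym n) :=
  {d | ∀ σ ∈ rowStab t0, d⁻¹ * σ * d ∈ youngSubgroup n (α ++ β) →
    d⁻¹ * σ * d ∈ symA n α β}

/-- `𝒞 = {d : d⁻¹ C_{t0} d ∩ Sym_{α|β} ⊆ Sym_β^{+|α|}}`. -/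
def CSet {n : ℕ} {lam : List ℕ} (t0 : Tab n lam) (α β : List ℕ) : Set (Sym n) :=
  {d | ∀ σ ∈ colStab t0, d⁻¹ * σ * d ∈ youngSubgroup n (α ++ β) →
    d⁻¹ * σ * d ∈ symB n α β}

/-- The double coset `R_{t0} x Sym_{α|β}`. -/
def dCoset {n : ℕ} {lam : List ℕ} (t0 : Tab n lam) (α β : List ℕ) (x : Sym n) :
    Set (Sym n) :=
  {ω | ∃ τ ∈ rowStab t0, ∃ ξ ∈ youngSubgroup n (α ++ β), ω = τ * x * ξ}

/-- The double coset `C_{t0} x Sym_{α|β}`. -/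
def cCoset {n : ℕ} {lam : List ℕ} (t0 : Tab n lam) (α β : List ℕ) (x : Sym n) :
    Set (Sym n) :=
  {ω | ∃ σ ∈ colStab t0, ∃ ξ ∈ youngSubgroup n (α ++ β), ω = σ * x * ξ}

/-- `ε` is the sign function `ε_𝔡` on the double coset `R_{t0} 𝔡 Sym_{α|β}`:
`ε(τ 𝔡 ξ_α ξ_β^{+|α|}) = sgn ξ_β`. -/
def IsEps {n : ℕ} {lam : List ℕ} (t0 : Tab n lam) (α β : List ℕ) (𝔡 : Sym n)
    (ε : Sym n → ℤ) : Prop :=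
  ∀ τ ∈ rowStab t0, ∀ ξa ∈ symA n α β, ∀ ξb ∈ symB n α β,
    ε (τ * 𝔡 * (ξa * ξb)) = (Equiv.Perm.sign ξb : ℤ)

/-- The coefficient `𝔞_{d,𝔡} = ∑_{σ ∈ C_{t0}, σd ∈ R_{t0} 𝔡 Sym_{α|β}} sgn(σ) ε_𝔡(σ d)`. -/
noncomputable def coeffA {n : ℕ} {lam : List ℕ} (t0 : Tab n lam) (α β : List ℕ)
    (ε : Sym n → ℤ) (d 𝔡 : Sym n) : ℤ :=
  ∑ σ : Sym n, if σ ∈ colStab t0 ∧ σ * d ∈ dCoset t0 α β 𝔡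
    then (Equiv.Perm.sign σ : ℤ) * ε (σ * d) else 0

/-- The multiset of colours in column `j` of `T`. -/
def colMul {lam : List ℕ} (T : Cell lam → Colour) (j : ℕ) : Multiset Colour :=
  (Finset.univ.filter fun c : Cell lam => (c.2 : ℕ) = j).val.map T

noncomputable def sortedCol (m : Multiset Colour) : List Colour := m.sort (· ≤ ·)

/-- Comparison of column multisets: the sorted lists agree up to position `k`, where
the first is larger. -/
def msGT (m m' : Multiset Colour) : Prop :=
  ∃ k, (∀ s, s < k → (sortedCol m).getD s (cCol 0) = (sortedCol m').getD s (cCol 0)) ∧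
    (sortedCol m').getD k (cCol 0) < (sortedCol m).getD k (cCol 0)

/-- The strict column-dominance order `T ⊳ T'`. -/
def TabGT {lam : List ℕ} (T T' : Cell lam → Colour) : Prop :=
  ∃ t, (∀ j, j < t → colMul T j = colMul T' j) ∧ msGT (colMul T t) (colMul T' t)

/-- The column-dominance pre-order `T ⊵ T'`. -/
def TabGE {lam : List ℕ} (T T' : Cell lam → Colour) : Prop :=
  (∀ j, colMul T j = colMul T' j) ∨ TabGT T T'


/-!
Every rearrangement is a product of adjacent transpositions, so it suffices to swap two
neighbouring parts. Swapping `αₖ` and `αₖ₊₁` is done by the Bender–Knuth involution for the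
colours `a = cₖ ⋖ b = cₖ₊₁`: an `a` with a `b` directly below it is paired with that `b` and both
stay, while in each row the remaining free entries, `r` copies of `a` followed by `s` copies of
`b`, are replaced by `s` copies of `a` followed by `r` copies of `b`. Since paired entries come in
equal numbers, this exchanges the contents of `a` and `b`. The involution only uses that `a` and
`b` may repeat in rows but not in columns; transposing the diagram exchanges row and column
repeats, so swapping `βₖ` and `βₖ₊₁` is the same involution on the conjugate shape.
-/

open Function

section Shape

variable {mu : List ℕ}

def rowLen (mu : List ℕ) (i : ℕ) : ℕ := mu.getD i 0

lemma lt_rowLen_iff {i j : ℕ} : j < rowLen mu i ↔ ∃ h : i < mu.length, j < mu[i] := by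
  by_cases hi : i < mu.length <;> simp [rowLen, hi]

lemma rowLen_eq_get (i : Fin mu.length) : rowLen mu i = mu.get i := by
  simp [rowLen]

def mkCell (mu : List ℕ) {i j : ℕ} (h : j < rowLen mu i) : Cell mu :=
  ⟨⟨i, (lt_rowLen_iff.1 h).1⟩, ⟨j, (lt_rowLen_iff.1 h).2⟩⟩

@[simp] lemma mkCell_fst {i j : ℕ} (h : j < rowLen mu i) : ((mkCell mu h).1 : ℕ) = i := rfl

@[simp] lemma mkCell_snd {i j : ℕ} (h : j < rowLen mu i) : ((mkCell mu h).2 : ℕ) = j := rfl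

lemma Cell.snd_lt_rowLen (c : Cell mu) : (c.2 : ℕ) < rowLen mu c.1 := by
  rw [rowLen_eq_get]
  exact c.2.2

lemma Cell.ext_val {c c' : Cell mu} (h₁ : (c.1 : ℕ) = c'.1) (h₂ : (c.2 : ℕ) = c'.2) :
    c = c' := by
  obtain ⟨⟨i, hi⟩, j, hj⟩ := c
  obtain ⟨⟨i', hi'⟩, j', hj'⟩ := c'
  simp only at h₁ h₂
  subst h₁ h₂
  rfl

lemma rowLen_eq_rowLen_ofRowLens (hs : mu.SortedGE) (i : ℕ) :
    rowLen mu i = (YoungDiagram.ofRowLens mu hs).rowLen i :=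
  eq_of_forall_lt_iff fun j => by
    rw [← YoungDiagram.mem_iff_lt_rowLen, YoungDiagram.mem_ofRowLens, lt_rowLen_iff]

lemma rowLen_rowLens (μ : YoungDiagram) (i : ℕ) : rowLen μ.rowLens i = μ.rowLen i := by
  refine eq_of_forall_lt_iff fun j => ?_
  simp only [lt_rowLen_iff, YoungDiagram.length_rowLens, YoungDiagram.get_rowLens, exists_prop,
    and_iff_right_iff_imp, ← YoungDiagram.mem_iff_lt_rowLen]
  exact fun h => YoungDiagram.mem_iff_lt_colLen.1 (μ.up_left_mem le_rfl (Nat.zero_le j) h)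

lemma rowLen_antitone (hs : mu.SortedGE) : Antitone (rowLen mu) := fun i i' h => by
  simpa only [rowLen_eq_rowLen_ofRowLens hs] using
    (YoungDiagram.ofRowLens mu hs).rowLen_anti i i' h

end Shape

section PairOrder

variable {α : Type*} [LinearOrder α] {a b u v : α}

lemma _root_.CovBy.lt_or_lt_of_not_mem_pair (h : a ⋖ b) (hv : ¬(v = a ∨ v = b)) :
    v < a ∨ b < v := by
  rw [not_or] at hv
  rcases lt_or_gt_of_ne hv.1 with hva | hva
  · exact .inl hva
  · exact .inr ((h.ge_of_gt hva).lt_of_ne' hv.2)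

lemma _root_.CovBy.lt_of_le_of_mem_pair (h : a ⋖ b) (hu : u = a ∨ u = b) (hv : ¬(v = a ∨ v = b))
    (huv : u ≤ v) : b < v := by
  refine (h.lt_or_lt_of_not_mem_pair hv).resolve_left fun hva => ?_
  rcases hu with rfl | rfl
  exacts [huv.not_gt hva, huv.not_gt (hva.trans h.lt)]

lemma _root_.CovBy.lt_of_le_of_not_mem_pair (h : a ⋖ b) (hu : ¬(u = a ∨ u = b))
    (hv : v = a ∨ v = b) (huv : u ≤ v) : u < a := by
  refine (h.lt_or_lt_of_not_mem_pair hu).resolve_right fun hbu => ?_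
  rcases hv with rfl | rfl
  exacts [huv.not_gt (h.lt.trans hbu), huv.not_gt hbu]

end PairOrder

section Colours

def IsCCol (x : Colour) : Prop := ∃ k, x = cCol k

lemma colour_cases (x : Colour) : IsCCol x ∨ ∃ k, x = dCol k := by
  rcases x with k | k
  exacts [.inl ⟨k, rfl⟩, .inr ⟨k, rfl⟩]

lemma cCol_injective : Injective cCol := fun _ _ h => Sum.inl_injective (toLex.injective h)

lemma dCol_injective : Injective dCol := fun _ _ h => Sum.inr_injective (toLex.injective h)

lemma cCol_ne_dCol (k m : ℕ) : cCol k ≠ dCol m := fun h => Sum.inl_ne_inr (toLex.injective h)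

@[simp] lemma cCol_lt_cCol {k m : ℕ} : cCol k < cCol m ↔ k < m := by simp [cCol]
@[simp] lemma dCol_lt_dCol {k m : ℕ} : dCol k < dCol m ↔ k < m := by simp [dCol]
@[simp] lemma cCol_lt_dCol (k m : ℕ) : cCol k < dCol m := by simp [cCol, dCol]
@[simp] lemma not_dCol_lt_cCol (k m : ℕ) : ¬ dCol k < cCol m := by simp [cCol, dCol]

lemma not_isCCol_iff {x : Colour} : ¬ IsCCol x ↔ ∃ k, x = dCol k := by
  refine ⟨(colour_cases x).resolve_left, ?_⟩
  rintro ⟨k, rfl⟩ ⟨m, h⟩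
  exact cCol_ne_dCol m k h.symm

lemma cCol_covBy (k : ℕ) : cCol k ⋖ cCol (k + 1) := by
  refine ⟨by simp, fun z h₁ h₂ => ?_⟩
  obtain ⟨m, rfl⟩ | ⟨m, rfl⟩ := colour_cases z <;> simp at h₁ h₂
  omega

lemma dCol_covBy (k : ℕ) : dCol k ⋖ dCol (k + 1) := by
  refine ⟨by simp, fun z h₁ h₂ => ?_⟩
  obtain ⟨m, rfl⟩ | ⟨m, rfl⟩ := colour_cases z <;> simp at h₁ h₂
  omega

end Colours

lemma _root_.List.getD_append_swap_adjacent {α : Type*} (l₁ l₂ : List α) (x y d : α) (k : ℕ) :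
    (l₁ ++ x :: y :: l₂).getD k d =
      (l₁ ++ y :: x :: l₂).getD (swap l₁.length (l₁.length + 1) k) d := by
  simp only [List.getD_eq_getElem?_getD, List.getElem?_append, swap_apply_def]
  split_ifs <;> simp_all [List.getElem?_cons]
  simp [show k - l₁.length ≠ 0 by omega, show k - l₁.length - 1 ≠ 0 by omega]

section Content

variable {mu : List ℕ}

def colourCount (T : Cell mu → Colour) (x : Colour) : ℕ := #{c | T c = x}

def typeCount (α β : List ℕ) (x : Colour) : ℕ := Sum.elim (α.getD · 0) (β.getD · 0) (ofLex x)

lemma hasType_iff {α β : List ℕ} {T : Cell mu → Colour} :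
    HasType α β T ↔ colourCount T = typeCount α β := by
  refine ⟨fun ⟨hc, hd⟩ => funext fun x => ?_,
    fun h => ⟨fun k => congrFun h (cCol k), fun k => congrFun h (dCol k)⟩⟩
  obtain ⟨k, rfl⟩ | ⟨k, rfl⟩ := colour_cases x
  exacts [hc k, hd k]

lemma colourCount_comp_equiv {ν : List ℕ} (e : Cell ν ≃ Cell mu) (T : Cell mu → Colour) :
    colourCount (T ∘ e) = colourCount T :=
  funext fun x => card_equiv e (by simp)

lemma typeCount_swap_left (l₁ l₂ β : List ℕ) (x y : ℕ) :
    typeCount (l₁ ++ x :: y :: l₂) β =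
      typeCount (l₁ ++ y :: x :: l₂) β ∘ swap (cCol l₁.length) (cCol (l₁.length + 1)) := by
  funext z
  obtain ⟨k, rfl⟩ | ⟨k, rfl⟩ := colour_cases z
  · rw [comp_apply, cCol_injective.swap_apply]
    exact List.getD_append_swap_adjacent ..
  · rw [comp_apply, swap_apply_of_ne_of_ne (cCol_ne_dCol _ _).symm (cCol_ne_dCol _ _).symm]; rfl

lemma typeCount_swap_right (α l₁ l₂ : List ℕ) (x y : ℕ) :
    typeCount α (l₁ ++ x :: y :: l₂) =
      typeCount α (l₁ ++ y :: x :: l₂) ∘ swap (dCol l₁.length) (dCol (l₁.length + 1)) := by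
  funext z
  obtain ⟨k, rfl⟩ | ⟨k, rfl⟩ := colour_cases z
  · rw [comp_apply, swap_apply_of_ne_of_ne (cCol_ne_dCol _ _) (cCol_ne_dCol _ _)]; rfl
  · rw [comp_apply, dCol_injective.swap_apply]
    exact List.getD_append_swap_adjacent ..

end Content

section Semistd

variable {mu : List ℕ}

def IsSemistdWith (P : Colour → Prop) (T : Cell mu → Colour) : Prop :=
  RowSemistd T ∧ ColSemistd T ∧
    (∀ c c' : Cell mu, c.1 = c'.1 → (c.2 : ℕ) ≠ c'.2 → T c = T c' → P (T c)) ∧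
    (∀ c c' : Cell mu, (c.2 : ℕ) = c'.2 → c.1 ≠ c'.1 → T c = T c' → ¬ P (T c))

lemma isSemistd_iff {T : Cell mu → Colour} : IsSemistd T ↔ IsSemistdWith IsCCol T := by
  simp only [IsSemistd, IsSemistdWith, RowRepeatC, ColRepeatD, not_isCCol_iff]
  rfl

-- Padding with `⊤` outside the diagram turns the rows and columns of a semistandard tableau
-- into monotone sequences indexed by all of `ℕ`.
noncomputable def extTab (T : Cell mu → Colour) (i j : ℕ) : WithTop Colour :=
  if h : j < rowLen mu i then T (mkCell mu h) else ⊤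

variable {P : Colour → Prop} {T : Cell mu → Colour} {i i' j j' : ℕ} {x : Colour}

lemma extTab_eq_of_coords {c : Cell mu} (hi : (c.1 : ℕ) = i) (hj : (c.2 : ℕ) = j) :
    extTab T i j = T c := by
  subst hi hj
  rw [extTab, dif_pos c.snd_lt_rowLen]
  exact congrArg (fun c => (T c : WithTop Colour)) (Cell.ext_val rfl rfl)

lemma extTab_of_rowLen_le (h : rowLen mu i ≤ j) : extTab T i j = ⊤ :=
  dif_neg (not_lt.2 h)

lemma extTab_eq_coe_iff : extTab T i j = x ↔ ∃ h : j < rowLen mu i, T (mkCell mu h) = x := by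
  unfold extTab
  split_ifs with h <;> simp [h]

lemma lt_rowLen_of_extTab_eq_coe (h : extTab T i j = x) : j < rowLen mu i :=
  (extTab_eq_coe_iff.1 h).1

lemma lt_rowLen_of_extTab_le (h : extTab T i j ≤ x) : j < rowLen mu i := by
  by_contra hj
  rw [extTab_of_rowLen_le (not_lt.1 hj)] at h
  exact WithTop.top_le_iff.not.2 WithTop.coe_ne_top h  

namespace IsSemistdWith

variable (hT : IsSemistdWith P T)
include hT

lemma extTab_mono_right (h : j ≤ j') : extTab T i j ≤ extTab T i j' := by
  by_cases h' : j' < rowLen mu i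
  · rw [extTab, dif_pos (h.trans_lt h'), extTab, dif_pos h', WithTop.coe_le_coe]
    rcases h.eq_or_lt with rfl | hlt
    · rfl
    · exact hT.1 _ _ rfl hlt
  · rw [extTab_of_rowLen_le (not_lt.1 h')]
    exact le_top

lemma extTab_mono_down (hmu : Antitone (rowLen mu)) (h : i ≤ i') :
    extTab T i j ≤ extTab T i' j := by
  by_cases h' : j < rowLen mu i'
  · rw [extTab, dif_pos (h'.trans_le (hmu h)), extTab, dif_pos h', WithTop.coe_le_coe]
    rcases h.eq_or_lt with rfl | hlt
    · rfl
    · exact hT.2.1 _ _ rfl hlt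
  · rw [extTab_of_rowLen_le (not_lt.1 h')]
    exact le_top

lemma extTab_row_repeat (h : j ≠ j') (h₁ : extTab T i j = x) (h₂ : extTab T i j' = x) : P x := by
  obtain ⟨hj, rfl⟩ := extTab_eq_coe_iff.1 h₁
  obtain ⟨hj', h₂⟩ := extTab_eq_coe_iff.1 h₂
  exact hT.2.2.1 (mkCell mu hj) (mkCell mu hj') rfl h h₂.symm

lemma extTab_col_repeat (h : i ≠ i') (h₁ : extTab T i j = x) (h₂ : extTab T i' j = x) :
    ¬ P x := by
  obtain ⟨hi, rfl⟩ := extTab_eq_coe_iff.1 h₁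
  obtain ⟨hi', h₂⟩ := extTab_eq_coe_iff.1 h₂
  exact hT.2.2.2 (mkCell mu hi) (mkCell mu hi') rfl (fun h' => h (congrArg Fin.val h')) h₂.symm

end IsSemistdWith

lemma isSemistdWith_of_extTab {S : Cell mu → Colour} (hrow : ∀ i, Monotone (extTab S i))
    (hcol : ∀ i j, extTab S i j ≤ extTab S (i + 1) j)
    (hrowRep : ∀ i j j' (x : Colour), j ≠ j' → extTab S i j = x → extTab S i j' = x → P x)
    (hcolRep : ∀ i j (x : Colour), extTab S i j = x → extTab S (i + 1) j = x → ¬ P x) :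
    IsSemistdWith P S := by
  have hcolMono (j : ℕ) {i i' : ℕ} (h : i ≤ i') : extTab S i j ≤ extTab S i' j :=
    monotone_nat_of_le_succ (f := (extTab S · j)) (hcol · j) h
  have hcolRep' (c c' : Cell mu) (hj : (c.2 : ℕ) = c'.2) (hi : c.1 < c'.1) (he : S c = S c') :
      ¬ P (S c) := by
    have h₁ : extTab S c.1 c.2 = S c := extTab_eq_of_coords rfl rfl
    have h₂ : extTab S c'.1 c.2 = S c := by rw [he]; exact extTab_eq_of_coords rfl hj.symm
    refine hcolRep c.1 c.2 _ h₁ (le_antisymm ?_ (h₁ ▸ hcol _ _))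
    exact h₂ ▸ hcolMono _ (Nat.succ_le_of_lt hi)
  refine ⟨fun c c' hi hj => ?_, fun c c' hj hi => ?_, fun c c' hi hj he => ?_,
    fun c c' hj hi he => ?_⟩
  · have := hrow c.1 hj.le
    rwa [extTab_eq_of_coords rfl rfl, extTab_eq_of_coords (congrArg Fin.val hi).symm rfl,
      WithTop.coe_le_coe] at this
  · have := hcolMono c.2 (Fin.le_iff_val_le_val.1 hi.le)
    rwa [extTab_eq_of_coords rfl rfl, extTab_eq_of_coords rfl hj.symm,
      WithTop.coe_le_coe] at this
  · exact hrowRep c.1 c.2 c'.2 _ hj (extTab_eq_of_coords rfl rfl)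
      (by rw [he]; exact extTab_eq_of_coords (congrArg Fin.val hi).symm rfl)
  · rcases lt_or_gt_of_ne hi with hlt | hlt
    · exact hcolRep' c c' hj hlt he
    · rw [he]
      exact hcolRep' c' c hj.symm hlt he.symm

end Semistd

lemma lt_card_filter_range_iff {Q : ℕ → Prop} (hQ : Antitone Q) {L j : ℕ} (hj : j < L) :
    Q j ↔ j < #{x ∈ range L | Q x} := by
  constructor
  · intro h
    calc j < #(range (j + 1)) := by simp
      _ ≤ _ := card_le_card fun y hy => by
        rw [mem_range] at hy
        exact mem_filter.2 ⟨mem_range.2 (by omega), hQ (Nat.le_of_lt_succ hy) h⟩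
  · intro h
    by_contra hn
    have hsub : {x ∈ range L | Q x} ⊆ range j := fun x hx => by
      rw [mem_filter] at hx
      exact mem_range.2 (lt_of_not_ge fun hjx => hn (hQ hjx hx.2))
    exact absurd (card_le_card hsub) (by simpa using h)

section RowCount

variable {mu : List ℕ} {Q R : ℕ → ℕ → Prop} {i : ℕ}

noncomputable def rowCount (mu : List ℕ) (Q : ℕ → ℕ → Prop) (i : ℕ) : ℕ :=
  #{j ∈ range (rowLen mu i) | Q i j}

lemma rowCount_le_rowLen : rowCount mu Q i ≤ rowLen mu i :=
  (card_filter_le _ _).trans (card_range _).le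

lemma rowCount_mono (h : ∀ j, Q i j → R i j) : rowCount mu Q i ≤ rowCount mu R i :=
  card_le_card (monotone_filter_right _ fun j _ => h j)

lemma rowCount_eq_sub {m m' : ℕ} (hm' : m' ≤ rowLen mu i)
    (h : ∀ j < rowLen mu i, Q i j ↔ m ≤ j ∧ j < m') : rowCount mu Q i = m' - m := by
  rw [rowCount, ← Nat.card_Ico]
  congr 1
  ext j
  simp only [mem_filter, mem_range, mem_Ico]
  exact ⟨fun ⟨hj, hQ⟩ => (h j hj).1 hQ, fun hj => ⟨by omega, (h j (by omega)).2 hj⟩⟩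

lemma rowCount_eq {m : ℕ} (hm : m ≤ rowLen mu i) (h : ∀ j < rowLen mu i, Q i j ↔ j < m) :
    rowCount mu Q i = m := by
  simpa using rowCount_eq_sub (m := 0) hm (by simpa using h)

lemma rowCount_congr (h : ∀ j, Q i j ↔ R i j) : rowCount mu Q i = rowCount mu R i := by
  simp only [rowCount, h]

lemma rowCount_of_length_le (h : mu.length ≤ i) : rowCount mu Q i = 0 := by
  rw [rowCount, rowLen, List.getD_eq_default _ _ h]
  simp

lemma card_filter_cell_eq_sum (Q : ℕ → ℕ → Prop) :
    #{c : Cell mu | Q c.1 c.2} = ∑ i ∈ range mu.length, rowCount mu Q i := by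
  rw [card_filter, ← univ_sigma_univ, sum_sigma, ← Fin.sum_univ_eq_sum_range]
  refine sum_congr rfl fun i _ => ?_
  rw [rowCount, card_filter, rowLen_eq_get, ← Fin.sum_univ_eq_sum_range]

lemma colourCount_eq_sum (T : Cell mu → Colour) (x : Colour) :
    colourCount T x = ∑ i ∈ range mu.length, rowCount mu (fun i j => extTab T i j = x) i := by
  rw [← card_filter_cell_eq_sum, colourCount]
  congr 1
  ext c
  simp [extTab_eq_of_coords rfl rfl]

lemma lt_rowCount_iff_of_extTab_le {T : Cell mu → Colour} {j : ℕ} {b : Colour}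
    (hQ : Antitone (Q i)) (hle : ∀ j, Q i j → extTab T i j ≤ b) :
    Q i j ↔ j < rowCount mu Q i := by
  by_cases hj : j < rowLen mu i
  · exact lt_card_filter_range_iff hQ hj
  · exact iff_of_false (fun hq => hj (lt_rowLen_of_extTab_le (hle j hq)))
      (fun h => hj (h.trans_le rowCount_le_rowLen))

end RowCount

namespace BenderKnuth

variable {mu : List ℕ}

structure Admissible (P : Colour → Prop) (a b : Colour) (T : Cell mu → Colour) : Prop where
  antitone : Antitone (rowLen mu)
  semistd : IsSemistdWith P T
  covBy : a ⋖ b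
  ha : P a
  hb : P b

section Definitions

variable (T : Cell mu → Colour) (a b : Colour)

/- For admissible `T`, each of `LtA`, `LtAOrPairedA`, `LeA`, `LeAOrFreeB`, `LeB` holds on an
initial segment of row `i`, of length its `rowCount`. These five lengths cut the row into the
entries `< a`, the paired `a`s, the free `a`s, the free `b`s, the paired `b`s and the entries
`> b`; in the new row the `a`s end at `splitPoint`. -/

def LtA (i j : ℕ) : Prop := extTab T i j < a

def LeA (i j : ℕ) : Prop := extTab T i j ≤ a

def LeB (i j : ℕ) : Prop := extTab T i j ≤ b

def PairedA (i j : ℕ) : Prop := extTab T i j = a ∧ extTab T (i + 1) j = b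

def PairedB (i j : ℕ) : Prop := ∃ i', i = i' + 1 ∧ PairedA T a b i' j

def LtAOrPairedA (i j : ℕ) : Prop := LtA T a i j ∨ PairedA T a b i j

def LeAOrFreeB (i j : ℕ) : Prop := LeA T a i j ∨ (extTab T i j = b ∧ ¬ PairedB T a b i j)

noncomputable def splitPoint (i : ℕ) : ℕ :=
  rowCount mu (LtAOrPairedA T a b) i +
    (rowCount mu (LeAOrFreeB T a b) i - rowCount mu (LeA T a) i)

noncomputable def involution : Cell mu → Colour := fun c =>
  if T c = a ∨ T c = b then (if (c.2 : ℕ) < splitPoint T a b c.1 then a else b) else T c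

end Definitions

variable {P : Colour → Prop} {a b : Colour} {T : Cell mu → Colour} {i j : ℕ}

lemma extTab_involution (i j : ℕ) : extTab (involution T a b) i j =
    if extTab T i j = a ∨ extTab T i j = b then
      (if j < splitPoint T a b i then (a : WithTop Colour) else b) else extTab T i j := by
  by_cases hj : j < rowLen mu i
  · simp only [extTab, dif_pos hj, involution, mkCell_fst, mkCell_snd, WithTop.coe_inj]
    by_cases h : T (mkCell mu hj) = a ∨ T (mkCell mu hj) = b <;>
      by_cases h' : j < splitPoint T a b i <;> simp [h, h']
  · simp [extTab_of_rowLen_le (not_lt.1 hj)]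

lemma mem_pair_involution_iff :
    (extTab (involution T a b) i j = a ∨ extTab (involution T a b) i j = b) ↔
      (extTab T i j = a ∨ extTab T i j = b) := by
  rw [extTab_involution]
  split_ifs with h <;> simp [h]

lemma extTab_involution_of_not_mem_pair (h : ¬(extTab T i j = a ∨ extTab T i j = b)) :
    extTab (involution T a b) i j = extTab T i j := by
  rw [extTab_involution, if_neg h]

lemma involution_eq_iff_of_ne {x : Colour} (ha : x ≠ a) (hb : x ≠ b) (c : Cell mu) :
    involution T a b c = x ↔ T c = x := by
  unfold involution
  split_ifs with h h' <;> aesop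

lemma rowCount_pairedB_zero : rowCount mu (PairedB T a b) 0 = 0 := by
  simp [rowCount, PairedB]

lemma rowCount_pairedB_succ (i : ℕ) :
    rowCount mu (PairedB T a b) (i + 1) = rowCount mu (PairedA T a b) i := by
  unfold rowCount
  congr 1
  ext j
  simp only [mem_filter, mem_range, PairedB, Nat.add_right_cancel_iff, exists_eq_left']
  exact ⟨fun h => ⟨lt_rowLen_of_extTab_eq_coe h.2.1, h.2⟩,
    fun h => ⟨lt_rowLen_of_extTab_eq_coe h.2.2, h.2⟩⟩

lemma sum_rowCount_pairedB :
    ∑ i ∈ range mu.length, rowCount mu (PairedB T a b) i =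
      ∑ i ∈ range mu.length, rowCount mu (PairedA T a b) i := by
  calc ∑ i ∈ range mu.length, rowCount mu (PairedB T a b) i
      = ∑ i ∈ range (mu.length + 1), rowCount mu (PairedB T a b) i := by
        rw [sum_range_succ, rowCount_of_length_le le_rfl, add_zero]
    _ = _ := by
        rw [sum_range_succ', rowCount_pairedB_zero, add_zero]
        exact sum_congr rfl fun i _ => rowCount_pairedB_succ i

namespace Admissible

variable (H : Admissible P a b T)
include H

lemma coe_covBy : (a : WithTop Colour) ⋖ b := WithTop.coe_covBy_coe.2 H.covBy

lemma b_le_extTab_succ (h : extTab T i j = a) : (b : WithTop Colour) ≤ extTab T (i + 1) j := by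
  have hle : (a : WithTop Colour) ≤ extTab T (i + 1) j :=
    h ▸ H.semistd.extTab_mono_down H.antitone (Nat.le_succ i)
  refine H.coe_covBy.ge_of_gt (hle.lt_of_ne fun h' => ?_)
  exact H.semistd.extTab_col_repeat (by omega) h h'.symm H.ha

lemma extTab_le_of_succ_eq (h : extTab T (i + 1) j = b) : extTab T i j ≤ a := by
  have hle : extTab T i j ≤ b := h ▸ H.semistd.extTab_mono_down H.antitone (Nat.le_succ i)
  refine H.coe_covBy.le_of_lt (hle.lt_of_ne fun h' => ?_)
  exact H.semistd.extTab_col_repeat (by omega) h' h H.hb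

lemma pairedA_of_mem_pair (h₁ : extTab T i j = a ∨ extTab T i j = b)
    (h₂ : extTab T (i + 1) j = a ∨ extTab T (i + 1) j = b) : PairedA T a b i j := by
  have hba : ¬ (b : WithTop Colour) ≤ a := not_le.2 H.coe_covBy.lt
  rcases h₂ with h₂ | h₂
  · have hup : extTab T i j ≤ a := h₂ ▸ H.semistd.extTab_mono_down H.antitone (Nat.le_succ i)
    have hupa : extTab T i j = a := h₁.resolve_right fun h => hba (h ▸ hup)
    exact absurd (h₂ ▸ H.b_le_extTab_succ hupa) hba
  · have hup := H.extTab_le_of_succ_eq h₂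
    exact ⟨h₁.resolve_right fun h => hba (h ▸ hup), h₂⟩

lemma ltAOrPairedA_antitone (i : ℕ) : Antitone (LtAOrPairedA T a b i) := by
  rintro j j' h (h' | ⟨ha, hb⟩)
  · exact .inl ((H.semistd.extTab_mono_right h).trans_lt h')
  · have hle : extTab T i j ≤ a := ha ▸ H.semistd.extTab_mono_right h
    rcases hle.lt_or_eq with hlt | heq
    · exact .inl hlt
    · exact .inr ⟨heq, le_antisymm (hb ▸ H.semistd.extTab_mono_right h) (H.b_le_extTab_succ heq)⟩

lemma leAOrFreeB_antitone (i : ℕ) : Antitone (LeAOrFreeB T a b i) := by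
  rintro j j' h (h' | ⟨hb, hfree⟩)
  · exact .inl ((H.semistd.extTab_mono_right h).trans h')
  · have hle : extTab T i j ≤ b := hb ▸ H.semistd.extTab_mono_right h
    rcases hle.lt_or_eq with hlt | heq
    · exact .inl (H.coe_covBy.le_of_lt hlt)
    · refine .inr ⟨heq, ?_⟩
      rintro ⟨i', rfl, ha, -⟩
      exact hfree ⟨i', rfl, le_antisymm (H.extTab_le_of_succ_eq hb)
        (ha ▸ H.semistd.extTab_mono_right h), hb⟩

lemma ltA_iff : LtA T a i j ↔ j < rowCount mu (LtA T a) i :=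
  lt_rowCount_iff_of_extTab_le (b := b)
    (fun _ _ h h' => (H.semistd.extTab_mono_right h).trans_lt h')
    (fun _ h => (h.trans H.coe_covBy.lt).le)

lemma leA_iff : LeA T a i j ↔ j < rowCount mu (LeA T a) i :=
  lt_rowCount_iff_of_extTab_le (b := b)
    (fun _ _ h h' => (H.semistd.extTab_mono_right h).trans h')
    (fun _ h => h.trans H.coe_covBy.lt.le)

lemma leB_iff : LeB T b i j ↔ j < rowCount mu (LeB T b) i :=
  lt_rowCount_iff_of_extTab_le (fun _ _ h h' => (H.semistd.extTab_mono_right h).trans h')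
    (fun _ h => h)

lemma ltAOrPairedA_iff : LtAOrPairedA T a b i j ↔ j < rowCount mu (LtAOrPairedA T a b) i :=
  lt_rowCount_iff_of_extTab_le (H.ltAOrPairedA_antitone i) fun _ h =>
    h.elim (fun h => (h.trans H.coe_covBy.lt).le) fun h => h.1 ▸ H.coe_covBy.lt.le

lemma leAOrFreeB_iff : LeAOrFreeB T a b i j ↔ j < rowCount mu (LeAOrFreeB T a b) i :=
  lt_rowCount_iff_of_extTab_le (H.leAOrFreeB_antitone i) fun _ h =>
    h.elim (fun h => h.trans H.coe_covBy.lt.le) fun h => h.1.le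

lemma rowCount_chain (i : ℕ) :
    rowCount mu (LtA T a) i ≤ rowCount mu (LtAOrPairedA T a b) i ∧
    rowCount mu (LtAOrPairedA T a b) i ≤ rowCount mu (LeA T a) i ∧
    rowCount mu (LeA T a) i ≤ rowCount mu (LeAOrFreeB T a b) i ∧
    rowCount mu (LeAOrFreeB T a b) i ≤ rowCount mu (LeB T b) i ∧
    rowCount mu (LeB T b) i ≤ rowLen mu i :=
  ⟨rowCount_mono fun _ => .inl,
    rowCount_mono fun _ h => h.elim le_of_lt fun h => h.1.le,
    rowCount_mono fun _ => .inl,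
    rowCount_mono fun _ h => h.elim (fun h => h.trans H.coe_covBy.lt.le) fun h => h.1.le,
    rowCount_le_rowLen⟩

lemma extTab_eq_a_iff :
    extTab T i j = a ↔ rowCount mu (LtA T a) i ≤ j ∧ j < rowCount mu (LeA T a) i := by
  have : extTab T i j = a ↔ LeA T a i j ∧ ¬ LtA T a i j := by
    simp only [LeA, LtA, not_lt, le_antisymm_iff]
  rw [this, H.leA_iff, H.ltA_iff]
  omega

lemma extTab_eq_b_iff :
    extTab T i j = b ↔ rowCount mu (LeA T a) i ≤ j ∧ j < rowCount mu (LeB T b) i := by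
  have : extTab T i j = b ↔ LeB T b i j ∧ ¬ LeA T a i j := by
    simp only [LeB, LeA, not_le]
    exact ⟨fun h => ⟨h.le, h ▸ H.coe_covBy.lt⟩,
      fun h => le_antisymm h.1 (H.coe_covBy.ge_of_gt h.2)⟩
  rw [this, H.leB_iff, H.leA_iff]
  omega

lemma pairedA_iff :
    PairedA T a b i j ↔ rowCount mu (LtA T a) i ≤ j ∧ j < rowCount mu (LtAOrPairedA T a b) i := by
  have : PairedA T a b i j ↔ LtAOrPairedA T a b i j ∧ ¬ LtA T a i j :=
    ⟨fun h => ⟨.inr h, by simp [LtA, h.1]⟩, fun h => h.1.resolve_left h.2⟩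
  rw [this, H.ltAOrPairedA_iff, H.ltA_iff]
  omega

lemma pairedB_iff :
    PairedB T a b i j ↔ rowCount mu (LeAOrFreeB T a b) i ≤ j ∧ j < rowCount mu (LeB T b) i := by
  have : PairedB T a b i j ↔ LeB T b i j ∧ ¬ LeAOrFreeB T a b i j := by
    refine ⟨fun h => ?_, fun ⟨hle, hn⟩ => ?_⟩
    · obtain ⟨i', rfl, -, hb⟩ := id h
      exact ⟨hb.le, fun h' =>
        h'.elim (fun ha => not_le.2 H.coe_covBy.lt (hb ▸ ha)) fun h' => h'.2 h⟩
    · rw [LeAOrFreeB, not_or, not_and_not_right] at hn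
      exact hn.2 (le_antisymm hle (H.coe_covBy.ge_of_gt (not_le.1 hn.1)))
  rw [this, H.leB_iff, H.leAOrFreeB_iff]
  omega

lemma mem_pair_iff : (extTab T i j = a ∨ extTab T i j = b) ↔
    rowCount mu (LtA T a) i ≤ j ∧ j < rowCount mu (LeB T b) i := by
  rw [H.extTab_eq_a_iff, H.extTab_eq_b_iff]
  have := H.rowCount_chain i
  omega


lemma extTab_involution_eq_a_iff : extTab (involution T a b) i j = a ↔
    rowCount mu (LtA T a) i ≤ j ∧ j < splitPoint T a b i := by
  have hab : (a : WithTop Colour) ≠ b := H.coe_covBy.lt.ne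
  have : extTab (involution T a b) i j = a ↔
      (extTab T i j = a ∨ extTab T i j = b) ∧ j < splitPoint T a b i := by
    rw [extTab_involution]
    split_ifs with h h' <;> simp_all [hab.symm]
  rw [this, H.mem_pair_iff]
  have := H.rowCount_chain i
  unfold splitPoint
  omega

lemma extTab_involution_eq_b_iff : extTab (involution T a b) i j = b ↔
    splitPoint T a b i ≤ j ∧ j < rowCount mu (LeB T b) i := by
  have hab : (a : WithTop Colour) ≠ b := H.coe_covBy.lt.ne
  have : extTab (involution T a b) i j = b ↔
      (extTab T i j = a ∨ extTab T i j = b) ∧ ¬ j < splitPoint T a b i := by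
    rw [extTab_involution]
    split_ifs with h h' <;> simp_all
  rw [this, H.mem_pair_iff]
  have := H.rowCount_chain i
  unfold splitPoint
  omega

lemma ltA_involution_iff : LtA (involution T a b) a i j ↔ LtA T a i j := by
  have not_lt_a {v : WithTop Colour} (h : v = a ∨ v = b) : ¬ v < a := by
    rcases h with rfl | rfl
    exacts [lt_irrefl _, not_lt.2 H.coe_covBy.lt.le]
  by_cases hz : extTab T i j = a ∨ extTab T i j = b
  · exact iff_of_false (not_lt_a (mem_pair_involution_iff.2 hz)) (not_lt_a hz)
  · rw [LtA, LtA, extTab_involution_of_not_mem_pair hz]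

lemma pairedA_involution_iff : PairedA (involution T a b) a b i j ↔ PairedA T a b i j := by
  refine ⟨fun ⟨ha, hb⟩ => H.pairedA_of_mem_pair (mem_pair_involution_iff.1 (.inl ha))
    (mem_pair_involution_iff.1 (.inr hb)), fun h => ⟨?_, ?_⟩⟩
  · have := H.pairedA_iff.1 h
    have := H.rowCount_chain i
    rw [H.extTab_involution_eq_a_iff]
    unfold splitPoint
    omega
  · have := (H.pairedB_iff (i := i + 1)).1 ⟨i, rfl, h⟩
    have := H.rowCount_chain (i + 1)
    rw [H.extTab_involution_eq_b_iff]
    unfold splitPoint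
    omega

lemma pairedB_involution_iff : PairedB (involution T a b) a b i j ↔ PairedB T a b i j :=
  exists_congr fun _ => and_congr_right fun _ => H.pairedA_involution_iff

lemma leA_involution_iff : LeA (involution T a b) a i j ↔ j < splitPoint T a b i := by
  have : LeA (involution T a b) a i j ↔
      LtA (involution T a b) a i j ∨ extTab (involution T a b) i j = a := le_iff_lt_or_eq
  rw [this, H.ltA_involution_iff, H.ltA_iff, H.extTab_involution_eq_a_iff]
  have := H.rowCount_chain i
  unfold splitPoint
  omega

lemma splitPoint_le_rowLen (i : ℕ) : splitPoint T a b i ≤ rowLen mu i := by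
  have := H.rowCount_chain i
  unfold splitPoint
  omega

lemma splitPoint_involution (i : ℕ) :
    splitPoint (involution T a b) a b i = rowCount mu (LeA T a) i := by
  have hc := H.rowCount_chain i
  have h₂ : rowCount mu (LtAOrPairedA (involution T a b) a b) i =
      rowCount mu (LtAOrPairedA T a b) i :=
    rowCount_congr fun _ => or_congr H.ltA_involution_iff H.pairedA_involution_iff
  have h₃ : rowCount mu (LeA (involution T a b) a) i = splitPoint T a b i :=
    rowCount_eq (H.splitPoint_le_rowLen i) fun _ _ => H.leA_involution_iff
  have h₄ : rowCount mu (LeAOrFreeB (involution T a b) a b) i =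
      rowCount mu (LeAOrFreeB T a b) i := by
    refine rowCount_eq (hc.2.2.2.1.trans hc.2.2.2.2) fun j _ => ?_
    rw [LeAOrFreeB, H.leA_involution_iff, H.extTab_involution_eq_b_iff,
      H.pairedB_involution_iff, H.pairedB_iff]
    unfold splitPoint
    omega
  rw [splitPoint, h₂, h₃, h₄, splitPoint]
  omega

lemma involution_involution : involution (involution T a b) a b = T := by
  funext c
  have hT : extTab T c.1 c.2 = T c := extTab_eq_of_coords rfl rfl
  by_cases hz : T c = a ∨ T c = b
  · have hz' : involution T a b c = a ∨ involution T a b c = b := by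
      unfold involution
      rw [if_pos hz]
      split_ifs <;> simp
    have hpos : (c.2 : ℕ) < rowCount mu (LeA T a) c.1 ↔ T c = a := by
      have h₁ := H.mem_pair_iff (i := c.1) (j := c.2)
      have h₂ := H.extTab_eq_a_iff (i := c.1) (j := c.2)
      simp only [hT, WithTop.coe_inj] at h₁ h₂
      rw [h₂]
      have := h₁.1 hz
      omega
    change (if involution T a b c = a ∨ involution T a b c = b then
      (if (c.2 : ℕ) < splitPoint (involution T a b) a b c.1 then a else b)
      else involution T a b c) = T c
    rw [if_pos hz', H.splitPoint_involution]
    split_ifs with h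
    · exact (hpos.1 h).symm
    · exact (hz.resolve_left (mt hpos.2 h)).symm
  · have h : involution T a b c = T c := if_neg hz
    change (if involution T a b c = a ∨ involution T a b c = b then
      (if (c.2 : ℕ) < splitPoint (involution T a b) a b c.1 then a else b)
      else involution T a b c) = T c
    rw [h, if_neg hz]


lemma extTab_involution_lt_of_le {i' j' : ℕ} (hle : extTab T i j ≤ extTab T i' j')
    (hmix : ¬((extTab T i j = a ∨ extTab T i j = b) ↔
      (extTab T i' j' = a ∨ extTab T i' j' = b))) :
    extTab (involution T a b) i j < extTab (involution T a b) i' j' := by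
  have hab := H.coe_covBy
  by_cases hz : extTab T i j = a ∨ extTab T i j = b
  · have hz' : ¬(extTab T i' j' = a ∨ extTab T i' j' = b) := fun h => hmix (iff_of_true hz h)
    have hb := hab.lt_of_le_of_mem_pair hz hz' hle
    rw [extTab_involution_of_not_mem_pair hz']
    rcases mem_pair_involution_iff.2 hz with h | h <;> rw [h]
    exacts [hab.lt.trans hb, hb]
  · have hz' : extTab T i' j' = a ∨ extTab T i' j' = b := by
      by_contra h
      exact hmix (iff_of_false hz h)
    have ha := hab.lt_of_le_of_not_mem_pair hz hz' hle
    rw [extTab_involution_of_not_mem_pair hz]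
    rcases mem_pair_involution_iff.2 hz' with h | h <;> rw [h]
    exacts [ha, ha.trans hab.lt]

lemma extTab_involution_mono_right {j' : ℕ} (h : j ≤ j') :
    extTab (involution T a b) i j ≤ extTab (involution T a b) i j' := by
  have hle := H.semistd.extTab_mono_right (i := i) h
  by_cases hz : extTab T i j = a ∨ extTab T i j = b <;>
    by_cases hz' : extTab T i j' = a ∨ extTab T i j' = b
  · rw [extTab_involution, extTab_involution, if_pos hz, if_pos hz']
    split_ifs <;> first | exact le_rfl | exact WithTop.coe_le_coe.2 H.covBy.lt.le | omega
  · exact (H.extTab_involution_lt_of_le hle (by tauto)).le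
  · exact (H.extTab_involution_lt_of_le hle (by tauto)).le
  · rwa [extTab_involution_of_not_mem_pair hz, extTab_involution_of_not_mem_pair hz']

lemma extTab_involution_lt_succ_or_eq (i j : ℕ) :
    extTab (involution T a b) i j < extTab (involution T a b) (i + 1) j ∨
      (extTab (involution T a b) i j = extTab T i j ∧
        extTab (involution T a b) (i + 1) j = extTab T (i + 1) j) := by
  have hle := H.semistd.extTab_mono_down H.antitone (Nat.le_succ i) (j := j)
  by_cases hz : extTab T i j = a ∨ extTab T i j = b <;>
    by_cases hz' : extTab T (i + 1) j = a ∨ extTab T (i + 1) j = b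
  · have hp := H.pairedA_involution_iff.2 (H.pairedA_of_mem_pair hz hz')
    rw [hp.1, hp.2]
    exact .inl (WithTop.coe_lt_coe.2 H.covBy.lt)
  · exact .inl (H.extTab_involution_lt_of_le hle (by tauto))
  · exact .inl (H.extTab_involution_lt_of_le hle (by tauto))
  · exact .inr ⟨extTab_involution_of_not_mem_pair hz, extTab_involution_of_not_mem_pair hz'⟩

lemma isSemistdWith_involution : IsSemistdWith P (involution T a b) := by
  refine isSemistdWith_of_extTab (fun i j j' h => H.extTab_involution_mono_right h)
    (fun i j => ?_) (fun i j j' x hj h₁ h₂ => ?_) (fun i j x h₁ h₂ => ?_)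
  · rcases H.extTab_involution_lt_succ_or_eq i j with h | ⟨h₁, h₂⟩
    · exact h.le
    · rw [h₁, h₂]
      exact H.semistd.extTab_mono_down H.antitone (Nat.le_succ i)
  · by_cases hx : (x : WithTop Colour) = a ∨ (x : WithTop Colour) = b
    · rcases hx with hx | hx <;> rw [WithTop.coe_inj] at hx <;> subst hx
      exacts [H.ha, H.hb]
    · have hz : ¬(extTab T i j = a ∨ extTab T i j = b) := by
        rwa [← mem_pair_involution_iff, h₁]
      have hz' : ¬(extTab T i j' = a ∨ extTab T i j' = b) := by
        rwa [← mem_pair_involution_iff, h₂]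
      rw [extTab_involution_of_not_mem_pair hz] at h₁
      rw [extTab_involution_of_not_mem_pair hz'] at h₂
      exact H.semistd.extTab_row_repeat hj h₁ h₂
  · rcases H.extTab_involution_lt_succ_or_eq i j with h | ⟨h₁', h₂'⟩
    · exact absurd (h₁ ▸ h₂ ▸ h) (lt_irrefl _)
    · exact H.semistd.extTab_col_repeat (by omega) (h₁'.symm.trans h₁) (h₂'.symm.trans h₂)

lemma admissible_involution : Admissible P a b (involution T a b) :=
  ⟨H.antitone, H.isSemistdWith_involution, H.covBy, H.ha, H.hb⟩


lemma rowCount_involution_eq_a (i : ℕ) :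
    rowCount mu (fun i j => extTab (involution T a b) i j = a) i =
      rowCount mu (PairedA T a b) i +
        (rowCount mu (LeAOrFreeB T a b) i - rowCount mu (LeA T a) i) := by
  have := H.rowCount_chain i
  rw [rowCount_eq_sub (H.splitPoint_le_rowLen i) fun _ _ => H.extTab_involution_eq_a_iff,
    rowCount_eq_sub (by omega) fun _ _ => H.pairedA_iff]
  unfold splitPoint
  omega

lemma rowCount_eq_b (i : ℕ) :
    rowCount mu (fun i j => extTab T i j = b) i =
      rowCount mu (PairedB T a b) i +
        (rowCount mu (LeAOrFreeB T a b) i - rowCount mu (LeA T a) i) := by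
  have := H.rowCount_chain i
  rw [rowCount_eq_sub (by omega) fun _ _ => H.extTab_eq_b_iff,
    rowCount_eq_sub (by omega) fun _ _ => H.pairedB_iff]
  omega

lemma colourCount_involution_left : colourCount (involution T a b) a = colourCount T b := by
  rw [colourCount_eq_sum, colourCount_eq_sum, sum_congr rfl fun i _ => H.rowCount_involution_eq_a i,
    sum_congr rfl fun i _ => H.rowCount_eq_b i, sum_add_distrib, sum_add_distrib,
    sum_rowCount_pairedB]

lemma colourCount_involution : colourCount (involution T a b) = colourCount T ∘ swap a b := by
  funext x
  rw [comp_apply]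
  rcases eq_or_ne x a with rfl | hxa
  · rw [swap_apply_left, H.colourCount_involution_left]
  rcases eq_or_ne x b with rfl | hxb
  · rw [swap_apply_right, ← H.admissible_involution.colourCount_involution_left,
      H.involution_involution]
  rw [swap_apply_of_ne_of_ne hxa hxb]
  exact congrArg card (filter_congr fun c _ => involution_eq_iff_of_ne hxa hxb c)

end Admissible

theorem card_colourCount_comp_swap (hmu : Antitone (rowLen mu)) (hab : a ⋖ b) (ha : P a)
    (hb : P b) (f : Colour → ℕ) :
    Nat.card {T : Cell mu → Colour // colourCount T = f ∘ swap a b ∧ IsSemistdWith P T} =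
      Nat.card {T : Cell mu → Colour // colourCount T = f ∧ IsSemistdWith P T} := by
  have H {T : Cell mu → Colour} (hT : IsSemistdWith P T) : Admissible P a b T :=
    ⟨hmu, hT, hab, ha, hb⟩
  refine Nat.card_congr
    ⟨fun T => ⟨involution T.1 a b, ?_, (H T.2.2).isSemistdWith_involution⟩,
      fun T => ⟨involution T.1 a b, ?_, (H T.2.2).isSemistdWith_involution⟩,
      fun T => Subtype.ext (H T.2.2).involution_involution,
      fun T => Subtype.ext (H T.2.2).involution_involution⟩
  · rw [(H T.2.2).colourCount_involution, T.2.1]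
    funext x
    simp
  · rw [(H T.2.2).colourCount_involution, T.2.1]

end BenderKnuth

section Transpose

variable {mu : List ℕ}

def conjugate (mu : List ℕ) (hs : mu.SortedGE) : List ℕ :=
  (YoungDiagram.ofRowLens mu hs).transpose.rowLens

lemma lt_rowLen_conjugate_iff (hs : mu.SortedGE) {i j : ℕ} :
    j < rowLen (conjugate mu hs) i ↔ i < rowLen mu j := by
  rw [conjugate, rowLen_rowLens, ← YoungDiagram.mem_iff_lt_rowLen, YoungDiagram.mem_transpose,
    Prod.swap_prod_mk, YoungDiagram.mem_iff_lt_rowLen, rowLen_eq_rowLen_ofRowLens hs]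

lemma rowLen_conjugate_antitone (hs : mu.SortedGE) : Antitone (rowLen (conjugate mu hs)) :=
  fun i i' h => by
    simpa only [conjugate, rowLen_rowLens] using
      (YoungDiagram.ofRowLens mu hs).transpose.rowLen_anti i i' h

def transposeCell (hs : mu.SortedGE) : Cell mu ≃ Cell (conjugate mu hs) where
  toFun c := mkCell _ ((lt_rowLen_conjugate_iff hs).2 c.snd_lt_rowLen)
  invFun c := mkCell _ ((lt_rowLen_conjugate_iff hs).1 c.snd_lt_rowLen)
  left_inv _ := Cell.ext_val rfl rfl
  right_inv _ := Cell.ext_val rfl rfl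

@[simp] lemma transposeCell_fst (hs : mu.SortedGE) (c : Cell mu) :
    ((transposeCell hs c).1 : ℕ) = c.2 := rfl

@[simp] lemma transposeCell_snd (hs : mu.SortedGE) (c : Cell mu) :
    ((transposeCell hs c).2 : ℕ) = c.1 := rfl

lemma isSemistdWith_transpose_iff (hs : mu.SortedGE) {P : Colour → Prop}
    {T : Cell mu → Colour} :
    IsSemistdWith (¬ P ·) (T ∘ (transposeCell hs).symm) ↔ IsSemistdWith P T := by
  have hforall {Φ : Cell (conjugate mu hs) → Cell (conjugate mu hs) → Prop} :
      (∀ c c', Φ c c') ↔ ∀ d d', Φ (transposeCell hs d) (transposeCell hs d') :=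
    ⟨fun h _ _ => h _ _, fun h c c' => by
      simpa using h ((transposeCell hs).symm c) ((transposeCell hs).symm c')⟩
  simp only [IsSemistdWith, RowSemistd, ColSemistd]
  rw [hforall, hforall, hforall, hforall]
  simp only [Fin.ext_iff, Fin.lt_def, transposeCell_fst, transposeCell_snd, comp_apply,
    Equiv.symm_apply_apply, not_not, ne_eq]
  constructor <;> rintro ⟨h₁, h₂, h₃, h₄⟩ <;> exact ⟨h₂, h₁, h₄, h₃⟩

lemma card_eq_card_transpose (hs : mu.SortedGE) (P : Colour → Prop) (f : Colour → ℕ) :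
    Nat.card {T : Cell mu → Colour // colourCount T = f ∧ IsSemistdWith P T} =
      Nat.card {S : Cell (conjugate mu hs) → Colour //
        colourCount S = f ∧ IsSemistdWith (¬ P ·) S} :=
  Nat.card_congr <| ((transposeCell hs).arrowCongr (Equiv.refl Colour)).subtypeEquiv fun T => by
    change _ ↔ colourCount (T ∘ (transposeCell hs).symm) = f ∧
      IsSemistdWith _ (T ∘ (transposeCell hs).symm)
    rw [colourCount_comp_equiv, isSemistdWith_transpose_iff]

end Transpose

lemma _root_.List.Perm.eq_of_forall_swap {α β : Type*} {f : List α → β}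
    (hf : ∀ l₁ l₂ x y, f (l₁ ++ x :: y :: l₂) = f (l₁ ++ y :: x :: l₂)) {l l' : List α}
    (h : l.Perm l') : f l = f l' := by
  suffices ∀ l₀, f (l₀ ++ l) = f (l₀ ++ l') from this []
  induction h with
  | nil => exact fun _ => rfl
  | cons z _ ih => exact fun l₀ => by simpa using ih (l₀ ++ [z])
  | swap x y l => exact fun l₀ => hf l₀ l y x
  | trans _ _ ih₁ ih₂ => exact fun l₀ => (ih₁ l₀).trans (ih₂ l₀)

section Rearrangement

variable {mu : List ℕ}

lemma card_sstd_eq_card_colourCount (α β : List ℕ) :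
    Nat.card {T : Cell mu → Colour // HasType α β T ∧ IsSemistd T} =
      Nat.card {T : Cell mu → Colour // colourCount T = typeCount α β ∧ IsSemistdWith IsCCol T} :=
  Nat.card_congr (Equiv.subtypeEquivRight fun _ => and_congr hasType_iff isSemistd_iff)

lemma card_sstd_swap_left (hs : mu.SortedGE) (l₁ l₂ β : List ℕ) (x y : ℕ) :
    Nat.card {T : Cell mu → Colour // HasType (l₁ ++ x :: y :: l₂) β T ∧ IsSemistd T} =
      Nat.card {T : Cell mu → Colour // HasType (l₁ ++ y :: x :: l₂) β T ∧ IsSemistd T} := by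
  rw [card_sstd_eq_card_colourCount, card_sstd_eq_card_colourCount, typeCount_swap_left]
  exact BenderKnuth.card_colourCount_comp_swap (rowLen_antitone hs) (cCol_covBy _) ⟨_, rfl⟩
    ⟨_, rfl⟩ _

lemma card_sstd_swap_right (hs : mu.SortedGE) (α l₁ l₂ : List ℕ) (x y : ℕ) :
    Nat.card {T : Cell mu → Colour // HasType α (l₁ ++ x :: y :: l₂) T ∧ IsSemistd T} =
      Nat.card {T : Cell mu → Colour // HasType α (l₁ ++ y :: x :: l₂) T ∧ IsSemistd T} := by
  rw [card_sstd_eq_card_colourCount, card_sstd_eq_card_colourCount, typeCount_swap_right,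
    card_eq_card_transpose hs, card_eq_card_transpose hs]
  exact BenderKnuth.card_colourCount_comp_swap (rowLen_conjugate_antitone hs) (dCol_covBy _)
    (not_isCCol_iff.2 ⟨_, rfl⟩) (not_isCCol_iff.2 ⟨_, rfl⟩) _

end Rearrangement

theorem card_sstd_rearrangement_general (n : ℕ) (lam : List ℕ) (hl : IsPartition n lam)
    (α β α' β' : List ℕ) (hα : List.Perm α' α) (hβ : List.Perm β' β) :
    Nat.card {T : Cell lam → Colour // HasType α' β' T ∧ IsSemistd T} =
      Nat.card {T : Cell lam → Colour // HasType α β T ∧ IsSemistd T} := by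
  have hs : lam.SortedGE := hl.1.sortedGE
  rw [hα.eq_of_forall_swap (f := fun γ => Nat.card {T // HasType γ β' T ∧ IsSemistd T})
      fun l₁ l₂ x y => card_sstd_swap_left hs l₁ l₂ β' x y,
    hβ.eq_of_forall_swap (f := fun γ => Nat.card {T // HasType α γ T ∧ IsSemistd T})
      fun l₁ l₂ x y => card_sstd_swap_right hs α l₁ l₂ x y]

/-- **Rearrangement invariance.** If `α̃` and `β̃` are obtained by rearranging the parts
of `α` and `β` respectively, then `|sstd(λ, (α̃|β̃))| = |sstd(λ, (α|β))|`. -/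
theorem card_sstd_rearrangement (n : ℕ) (lam : List ℕ) (hl : IsPartition n lam)
    (α β α' β' : List ℕ) (hab : IsBicomp n α β)
    (hα : List.Perm α' α) (hβ : List.Perm β' β) :
    Nat.card {T : Cell lam → Colour // HasType α' β' T ∧ IsSemistd T} =
      Nat.card {T : Cell lam → Colour // HasType α β T ∧ IsSemistd T} :=
  card_sstd_rearrangement_general n lam hl α β α' β' hα hβ

end SignedYoung
end

section
/- Let $\mathfrak{d} \in \mathscr{R}$. Then there is a well-defined map $\pi_{\mathfrak{d}} \colon R_{\t_0}\,\mathfrak{d}\,\mathrm{Sym}_{\alpha|\beta} \to \mathrm{Sym}_\beta$ satisfying $\pi_{\mathfrak{d}}(\tau\,\mathfrak{d}\,\xi_\alpha\,\xi_\beta^{+|\alpha|}) = \xi_\beta$ for all $\tau \in R_{\t_0}$ and $(\xi_\alpha,\xi_\beta) \in \mathrm{Sym}_\alpha \times \mathrm{Sym}_\beta$; i.e., the $\beta$-component of any factorization of an element of the double coset $R_{\t_0}\,\mathfrak{d}\,\mathrm{Sym}_{\alpha|\beta}$ is uniquely determined. -/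
/-! If `τ 𝔡 ξ_α ξ_β = τ' 𝔡 ξ'_α ξ'_β`, then `𝔡⁻¹ (τ'⁻¹ τ) 𝔡 = ξ'_α ξ'_β (ξ_α ξ_β)⁻¹` lies in
`𝔡⁻¹ R_{t0} 𝔡 ∩ Sym_{α|β} ⊆ Sym_α`. Hence `ξ'_β ξ_β⁻¹` fixes every point `≥ |α|`, and, being in
`Sym_β^{+|α|}`, also every point `< |α|`. -/

namespace SignedYoung
open Equiv Finset
open scoped Classical

theorem inv_mul_mem_rowStab {n : ℕ} {lam : List ℕ} {t : Tab n lam} {τ τ' : Sym n}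
    (hτ : τ ∈ rowStab t) (hτ' : τ' ∈ rowStab t) : τ'⁻¹ * τ ∈ rowStab t := fun a =>
  calc (t.symm ((τ'⁻¹ * τ) a)).1 = (t.symm (τ' ((τ'⁻¹ * τ) a))).1 := (hτ' _).symm
    _ = (t.symm (τ a)).1 := by rw [← Perm.mul_apply, mul_inv_cancel_left]
    _ = (t.symm a).1 := hτ a

theorem symA_subset_fixingSubgroup (n : ℕ) (α β : List ℕ) :
    symA n α β ⊆ fixingSubgroup (Sym n) {i : Fin n | α.sum ≤ (i : ℕ)} :=
  fun _ hσ => (mem_fixingSubgroup_iff _).2 fun i hi => hσ.2 i hi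

theorem symB_subset_fixingSubgroup (n : ℕ) (α β : List ℕ) :
    symB n α β ⊆ fixingSubgroup (Sym n) {i : Fin n | α.sum ≤ (i : ℕ)}ᶜ :=
  fun _ hσ => (mem_fixingSubgroup_iff _).2 fun i hi => hσ.2 i (not_le.1 hi)

theorem disjoint_fixingSubgroup_compl {X : Type*} (s : Set X) :
    Disjoint (fixingSubgroup (Perm X) s) (fixingSubgroup (Perm X) sᶜ) := by
  rw [Subgroup.disjoint_def]
  intro σ hs hsc
  ext x
  by_cases hx : x ∈ s
  · exact (mem_fixingSubgroup_iff _).1 hs x hx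
  · exact (mem_fixingSubgroup_iff _).1 hsc x hx

theorem eq_of_mul_mul_inv_mem_of_disjoint {G : Type*} [Group G] {K L : Subgroup G}
    (hKL : Disjoint K L) {a a' b b' : G} (ha : a ∈ K) (ha' : a' ∈ K) (hb : b ∈ L)
    (hb' : b' ∈ L) (h : a' * b' * (a * b)⁻¹ ∈ K) : b = b' := by
  have hK : b' * b⁻¹ ∈ K := by
    have := K.mul_mem (K.mul_mem (K.inv_mem ha') h) ha
    rwa [show a'⁻¹ * (a' * b' * (a * b)⁻¹) * a = b' * b⁻¹ by group] at this
  have hL : b' * b⁻¹ ∈ L := L.mul_mem hb' (L.inv_mem hb)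
  exact (mul_inv_eq_one.1 (Subgroup.disjoint_def.1 hKL hK hL)).symm

theorem beta_component_well_defined_general (n : ℕ) (lam : List ℕ)
    (α β : List ℕ) (t0 : Tab n lam) (𝔡 : Sym n)
    (h𝔡 : 𝔡 ∈ RSet t0 α β) :
    ∀ τ ∈ rowStab t0, ∀ τ' ∈ rowStab t0,
    ∀ ξa ∈ symA n α β, ∀ ξa' ∈ symA n α β,
    ∀ ξb ∈ symB n α β, ∀ ξb' ∈ symB n α β,
      τ * 𝔡 * (ξa * ξb) = τ' * 𝔡 * (ξa' * ξb') → ξb = ξb' := by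
  intro τ hτ τ' hτ' ξa hξa ξa' hξa' ξb hξb ξb' hξb' heq
  have hconj : 𝔡⁻¹ * (τ'⁻¹ * τ) * 𝔡 = ξa' * ξb' * (ξa * ξb)⁻¹ := by
    rw [show 𝔡⁻¹ * (τ'⁻¹ * τ) * 𝔡 = (τ' * 𝔡)⁻¹ * (τ * 𝔡 * (ξa * ξb)) * (ξa * ξb)⁻¹ by group,
      heq]
    group
  have hyoung : ξa' * ξb' * (ξa * ξb)⁻¹ ∈ youngSubgroup n (α ++ β) :=
    mul_mem (mul_mem hξa'.1 hξb'.1) (inv_mem (mul_mem hξa.1 hξb.1))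
  have hA : ξa' * ξb' * (ξa * ξb)⁻¹ ∈ symA n α β :=
    hconj ▸ h𝔡 _ (inv_mul_mem_rowStab hτ hτ') (hconj ▸ hyoung)
  exact eq_of_mul_mul_inv_mem_of_disjoint (disjoint_fixingSubgroup_compl _)
    (symA_subset_fixingSubgroup n α β hξa) (symA_subset_fixingSubgroup n α β hξa')
    (symB_subset_fixingSubgroup n α β hξb) (symB_subset_fixingSubgroup n α β hξb')
    (symA_subset_fixingSubgroup n α β hA)

/-- **Well-definedness of the projection `π_𝔡`.** For `𝔡 ∈ ℛ`, the `β`-component of any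
factorization `τ 𝔡 ξ_α ξ_β^{+|α|}` of an element of the double coset `R_{t0} 𝔡 Sym_{α|β}`
is uniquely determined. -/
theorem beta_component_well_defined (n : ℕ) (lam : List ℕ) (hl : IsPartition n lam)
    (α β : List ℕ) (hab : IsBicomp n α β) (t0 : Tab n lam) (𝔡 : Sym n)
    (h𝔡 : 𝔡 ∈ RSet t0 α β) :
    ∀ τ ∈ rowStab t0, ∀ τ' ∈ rowStab t0,
    ∀ ξa ∈ symA n α β, ∀ ξa' ∈ symA n α β,
    ∀ ξb ∈ symB n α β, ∀ ξb' ∈ symB n α β,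
      τ * 𝔡 * (ξa * ξb) = τ' * 𝔡 * (ξa' * ξb') → ξb = ξb' :=
  beta_component_well_defined_general n lam α β t0 𝔡 h𝔡

end SignedYoung
end

section
/- Let $d, \mathfrak{d} \in \mathrm{Sym}_n$ with $\mathfrak{d} \in \mathscr{R}$. If $C_{\t_0}\, d\, \mathrm{Sym}_{\alpha|\beta} \cap R_{\t_0}\,\mathfrak{d}\,\mathrm{Sym}_{\alpha|\beta} = \varnothing$, or if $d \notin \mathscr{C}$, then the integer coefficient $\mathfrak{a}_{d,\mathfrak{d}} = \sum_{\sigma \in C_{\t_0},\ \sigma d \in R_{\t_0}\mathfrak{d}\mathrm{Sym}_{\alpha|\beta}} \mathrm{sgn}(\sigma)\,\varepsilon_{\mathfrak{d}}(\sigma d)$ is zero. -/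
namespace SignedYoung
open Equiv Finset
open scoped Classical

/-! If the double cosets are disjoint, no summand of `𝔞_{d,𝔡}` survives. If `d ∉ 𝒞`, pick
`σ ∈ C_{t0}` with `g = d⁻¹ σ d ∈ Sym_{α|β}` moving some `i < |α|`. The transposition
`c = (d i, σ (d i))` lies in `C_{t0}`, and `d⁻¹ c d = (i, g i)` lies in `Sym_α`. Right
multiplication by `c` permutes the summands, flips `sgn σ` and fixes `ε_𝔡(σ d)`, since `ε_𝔡` is
invariant under right multiplication by `Sym_α` (which commutes with `Sym_β^{+|α|}`). Hence
`𝔞_{d,𝔡} = -𝔞_{d,𝔡}`. -/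

lemma apply_swap_apply_of_apply_eq {α γ : Type*} [DecidableEq α] {f : α → γ} {a b : α}
    (h : f a = f b) (x : α) : f (swap a b x) = f x := by
  rw [swap_apply_def]
  split_ifs with hxa hxb
  · rw [hxa, h]
  · rw [hxb, h]
  · rfl

lemma sum_eq_zero_of_mul_right_eq_neg {G R : Type*} [Group G] [Fintype G]
    [NonAssocRing R] [NoZeroDivisors R] [CharZero R] {f : G → R} (c : G)
    (h : ∀ g, f (g * c) = -f g) : ∑ g, f g = 0 := by
  refine CharZero.eq_neg_self_iff.mp ?_
  calc ∑ g, f g = ∑ g, f (g * c) :=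
        (Fintype.sum_equiv (Equiv.mulRight c) (fun g => f (g * c)) f fun _ => rfl).symm
    _ = -∑ g, f g := by simp only [h, Finset.sum_neg_distrib]

section YoungSubgroup

variable {n : ℕ} {α β : List ℕ}

lemma blockOf_append_lt_length_iff {i : ℕ} :
    blockOf (α ++ β) i < α.length ↔ i < α.sum := by
  set P : ℕ → Prop := fun j => ((α ++ β).take (j + 1)).sum ≤ i
  have hmono : ∀ {j k : ℕ}, j ≤ k → ((α ++ β).take j).sum ≤ ((α ++ β).take k).sum :=
    fun hjk => List.monotone_sum_take _ hjk
  have hα : ((α ++ β).take α.length).sum = α.sum := by rw [List.take_left]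
  have hblock : blockOf (α ++ β) i =
      Nat.count P α.length + Nat.count (fun k => P (α.length + k)) β.length := by
    rw [← Nat.count_add, ← List.length_append]
    rfl
  constructor
  · intro h
    by_contra! hi
    have : Nat.count P α.length = α.length :=
      Nat.count_of_forall fun j hj => (hmono (by omega : j + 1 ≤ α.length)).trans (hα.trans_le hi)
    omega
  · intro hi
    obtain ⟨m, hm⟩ : ∃ m, α.length = m + 1 :=
      Nat.exists_eq_succ_of_ne_zero fun h => by simp [List.length_eq_zero_iff.mp h] at hi
    have htail : Nat.count (fun k => P (α.length + k)) β.length = 0 :=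
      Nat.count_of_forall_not fun k _ hk =>
        ((hα.symm.trans_le (hmono (by omega : α.length ≤ α.length + k + 1))).trans hk).not_gt hi
    have hlast : ¬ P m := by simp only [P, ← hm, hα]; omega
    rw [hblock, htail, hm, Nat.count_succ, if_neg hlast]
    have := Nat.count_le (p := P) (n := m)
    omega

lemma lt_sum_iff_of_mem_youngSubgroup {ξ : Sym n} (hξ : ξ ∈ youngSubgroup n (α ++ β))
    (i : Fin n) : ((ξ i : Fin n) : ℕ) < α.sum ↔ (i : ℕ) < α.sum := by
  rw [← blockOf_append_lt_length_iff, ← blockOf_append_lt_length_iff (β := β), hξ i]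

lemma mul_mem_symA {a b : Sym n} (ha : a ∈ symA n α β) (hb : b ∈ symA n α β) :
    a * b ∈ symA n α β :=
  ⟨mul_mem ha.1 hb.1, fun i hi => by rw [Perm.mul_apply, hb.2 i hi, ha.2 i hi]⟩

lemma commute_of_mem_symA_of_mem_symB {a b : Sym n} (ha : a ∈ symA n α β)
    (hb : b ∈ symB n α β) : Commute a b := by
  refine Perm.Disjoint.commute fun i => ?_
  by_cases hi : (i : ℕ) < α.sum
  · exact Or.inr (hb.2 i hi)
  · exact Or.inl (ha.2 i (by omega))

lemma exists_symA_mul_symB {ξ : Sym n} (hξ : ξ ∈ youngSubgroup n (α ++ β)) :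
    ∃ ξa ∈ symA n α β, ∃ ξb ∈ symB n α β, ξ = ξa * ξb := by
  let ξa : Sym n := Perm.ofSubtype
    (ξ.subtypePerm (p := fun i : Fin n => (i : ℕ) < α.sum)
      (lt_sum_iff_of_mem_youngSubgroup hξ))
  have hξa_lt : ∀ i : Fin n, (i : ℕ) < α.sum → ξa i = ξ i := fun i hi =>
    Perm.ofSubtype_apply_of_mem (a := i) _ hi
  have hξa_ge : ∀ i : Fin n, α.sum ≤ (i : ℕ) → ξa i = i := fun i hi =>
    Perm.ofSubtype_apply_of_not_mem (a := i) _ (by omega)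
  have hξa : ξa ∈ symA n α β := by
    refine ⟨fun i => ?_, hξa_ge⟩
    by_cases hi : (i : ℕ) < α.sum
    · rw [hξa_lt i hi]; exact hξ i
    · rw [hξa_ge i (by omega)]
  refine ⟨ξa, hξa, ξa⁻¹ * ξ, ⟨mul_mem (inv_mem hξa.1) hξ, fun i hi => ?_⟩, by group⟩
  rw [Perm.mul_apply, Perm.inv_eq_iff_eq, hξa_lt i hi]

lemma swap_mem_symA {i j : Fin n} (hi : (i : ℕ) < α.sum) (hj : (j : ℕ) < α.sum)
    (hij : blockOf (α ++ β) i = blockOf (α ++ β) j) : swap i j ∈ symA n α β := by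
  refine ⟨apply_swap_apply_of_apply_eq (f := fun x : Fin n => blockOf (α ++ β) x) hij,
    fun x hx => swap_apply_of_ne_of_ne ?_ ?_⟩ <;> rintro rfl <;> omega

end YoungSubgroup

section Coefficient

variable {n : ℕ} {lam : List ℕ} {t0 : Tab n lam} {α β : List ℕ}

lemma mul_mem_colStab_iff {σ c : Sym n} (hc : c ∈ colStab t0) :
    σ * c ∈ colStab t0 ↔ σ ∈ colStab t0 := by
  refine ⟨fun h a => ?_, fun h a => by rw [Perm.mul_apply, h, hc]⟩
  obtain ⟨b, rfl⟩ := c.surjective a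
  exact (h b).trans (hc b).symm

lemma swap_mem_colStab {a b : Fin n} (h : ((t0.symm a).2 : ℕ) = (t0.symm b).2) :
    swap a b ∈ colStab t0 :=
  apply_swap_apply_of_apply_eq (f := fun x => ((t0.symm x).2 : ℕ)) h

lemma mul_mem_dCoset_iff {x ω g : Sym n} (hg : g ∈ youngSubgroup n (α ++ β)) :
    ω * g ∈ dCoset t0 α β x ↔ ω ∈ dCoset t0 α β x := by
  constructor
  · rintro ⟨τ, hτ, ξ, hξ, h⟩
    exact ⟨τ, hτ, ξ * g⁻¹, mul_mem hξ (inv_mem hg), by rw [← mul_assoc, ← h]; group⟩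
  · rintro ⟨τ, hτ, ξ, hξ, rfl⟩
    exact ⟨τ, hτ, ξ * g, mul_mem hξ hg, by group⟩

lemma eps_mul_of_mem_symA {𝔡 : Sym n} {ε : Sym n → ℤ} (hε : IsEps t0 α β 𝔡 ε)
    {ω g : Sym n} (hω : ω ∈ dCoset t0 α β 𝔡) (hg : g ∈ symA n α β) : ε (ω * g) = ε ω := by
  obtain ⟨τ, hτ, ξ, hξ, rfl⟩ := hω
  obtain ⟨ξa, hξa, ξb, hξb, rfl⟩ := exists_symA_mul_symB hξ
  have hcomm : τ * 𝔡 * (ξa * ξb) * g = τ * 𝔡 * (ξa * g * ξb) := by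
    rw [mul_assoc ξa g, (commute_of_mem_symA_of_mem_symB hg hξb).eq]
    simp only [mul_assoc]
  rw [hcomm, hε τ hτ _ (mul_mem_symA hξa hg) ξb hξb, hε τ hτ ξa hξa ξb hξb]

lemma coeffA_eq_zero_of_disjoint {ε : Sym n → ℤ} {d 𝔡 : Sym n}
    (h : cCoset t0 α β d ∩ dCoset t0 α β 𝔡 = ∅) : coeffA t0 α β ε d 𝔡 = 0 := by
  refine Finset.sum_eq_zero fun σ _ => if_neg ?_
  rintro ⟨hσ, hσd⟩
  exact h.subset ⟨⟨σ, hσ, 1, one_mem _, by group⟩, hσd⟩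

lemma coeffA_eq_zero_of_sign_eq_neg_one {ε : Sym n → ℤ} {d 𝔡 : Sym n}
    (hε : IsEps t0 α β 𝔡 ε) {c : Sym n} (hc : c ∈ colStab t0) (hsign : Perm.sign c = -1)
    (hcA : d⁻¹ * c * d ∈ symA n α β) : coeffA t0 α β ε d 𝔡 = 0 := by
  refine sum_eq_zero_of_mul_right_eq_neg c fun σ => ?_
  have hσcd : σ * c * d = σ * d * (d⁻¹ * c * d) := by group
  simp only [hσcd, mul_mem_colStab_iff hc, mul_mem_dCoset_iff hcA.1]
  split_ifs with hσ
  · rw [eps_mul_of_mem_symA hε hσ.2 hcA, Perm.sign_mul, hsign]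
    push_cast
    ring
  · rw [neg_zero]

lemma exists_sign_eq_neg_one_of_notMem_CSet {d : Sym n} (hd : d ∉ CSet t0 α β) :
    ∃ c ∈ colStab t0, Perm.sign c = -1 ∧ d⁻¹ * c * d ∈ symA n α β := by
  simp only [CSet, Set.mem_ofPred_eq, not_forall] at hd
  obtain ⟨σ, hσ, hY, hnB⟩ := hd
  set g := d⁻¹ * σ * d with hg
  obtain ⟨i, hi, hgi⟩ : ∃ i : Fin n, (i : ℕ) < α.sum ∧ g i ≠ i := by
    by_contra! h
    exact hnB ⟨hY, h⟩
  have hσi : d (g i) = σ (d i) := by simp [hg]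
  have hconj : d⁻¹ * swap (d i) (d (g i)) * d = swap i (g i) := by
    rw [swap_apply_apply]
    group
  refine ⟨swap (d i) (d (g i)), ?_, Perm.sign_swap (d.injective.ne hgi.symm), ?_⟩
  · rw [hσi]
    exact swap_mem_colStab (hσ (d i)).symm
  · rw [hconj]
    exact swap_mem_symA hi ((lt_sum_iff_of_mem_youngSubgroup hY i).mpr hi) (hY i).symm

end Coefficient

theorem coeffA_eq_zero_general (n : ℕ) (lam : List ℕ)
    (α β : List ℕ) (t0 : Tab n lam)
    (d 𝔡 : Sym n)
    (ε : Sym n → ℤ) (hε : IsEps t0 α β 𝔡 ε)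
    (h : cCoset t0 α β d ∩ dCoset t0 α β 𝔡 = ∅ ∨ d ∉ CSet t0 α β) :
    coeffA t0 α β ε d 𝔡 = 0 := by
  rcases h with hdisj | hd
  · exact coeffA_eq_zero_of_disjoint hdisj
  · obtain ⟨c, hc, hsign, hcA⟩ := exists_sign_eq_neg_one_of_notMem_CSet hd
    exact coeffA_eq_zero_of_sign_eq_neg_one hε hc hsign hcA

/-- **Vanishing of `𝔞_{d,𝔡}` (Lemma 3.8(ii)).** If the double cosets
`C_{t0} d Sym_{α|β}` and `R_{t0} 𝔡 Sym_{α|β}` are disjoint, or if `d ∉ 𝒞`, then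
`𝔞_{d,𝔡} = 0`. -/
theorem coeffA_eq_zero (n : ℕ) (lam : List ℕ) (hl : IsPartition n lam)
    (α β : List ℕ) (hab : IsBicomp n α β) (t0 : Tab n lam)
    (d 𝔡 : Sym n) (h𝔡 : 𝔡 ∈ RSet t0 α β)
    (ε : Sym n → ℤ) (hε : IsEps t0 α β 𝔡 ε)
    (h : cCoset t0 α β d ∩ dCoset t0 α β 𝔡 = ∅ ∨ d ∉ CSet t0 α β) :
    coeffA t0 α β ε d 𝔡 = 0 :=
  coeffA_eq_zero_general n lam α β t0 d 𝔡 ε hε h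

end SignedYoung
end

section
/- The map $\psi \colon \mathbb{Z}\mathscr{T}(\lambda) \to S^\lambda_{\mathbb{Z}}$ sending a $\lambda$-tableau $\t$ to the polytabloid $e_\t$ is a $\mathbb{Z}\mathrm{Sym}_n$-module epimorphism whose kernel is generated as a $\mathbb{Z}$-module by the Garnir elements $G^{\t}_{\Delta} \cdot \t$ (for $\t \in \mathscr{T}(\lambda)$ and Garnir transversals $\Delta$) together with the elements $\pi \cdot \t - \mathrm{sgn}(\pi)\,\t$ (for $\t \in \mathscr{T}(\lambda)$ and $\pi \in C_{\t}$). -/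
/-!
`ψ` kills the relations: `e_{π t} = sgn(π) e_t` for `π ∈ C_t`, and the sum of `sgn(g) e_{g t}`
over `g ∈ Sym_{X ∪ Y}` is `|Sym_X Sym_Y|` times the image of the Garnir element, while it vanishes:
by pigeonhole two cells of `X ∪ Y` share a row, and their transposition pairs off the terms.

Conversely, modulo the relations every tableau is a combination of standard ones (straightening):
a column descent is removed by a relation `π t - sgn(π) t`, and a row descent `t(i, j) > t(i, j')`
by the Garnir relation for the cells of column `j` at or below row `i` and of column `j'` at or
above it; every step increases `(∑ col(c) t(c), ∑ row(c) t(c))` lexicographically. Standard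
polytabloids are linearly independent, since `{t}` is the least tabloid of `e_t` when tabloids are
ordered lexicographically by the row of each entry. So the relations span the kernel.
-/

namespace SignedYoung
open Equiv Finset
open scoped Classical

/-- Row equivalence of tableaux: same numbers in each row (tabloids are the classes). -/
def rowEquiv (n : ℕ) (lam : List ℕ) (t t' : Tab n lam) : Prop :=
  ∀ a : Fin n, (t.symm a).1 = (t'.symm a).1

def tabSetoid (n : ℕ) (lam : List ℕ) : Setoid (Tab n lam) :=
  ⟨rowEquiv n lam, ⟨fun _ _ => rfl, fun h a => (h a).symm, fun h h' a => (h a).trans (h' a)⟩⟩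

/-- Tabloids: row-equivalence classes of `λ`-tableaux; they index a `ℤ`-basis of the
Young permutation module `M^λ_ℤ`. -/
abbrev Tabloid (n : ℕ) (lam : List ℕ) := Quotient (tabSetoid n lam)

/-- The Young permutation module `M^λ_ℤ`, free on the tabloids. -/
abbrev Mlam (n : ℕ) (lam : List ℕ) := Tabloid n lam →₀ ℤ

/-- The polytabloid `e_t = ∑_{σ ∈ C_t} sgn(σ) (σ · {t})`. -/
noncomputable def eTab (n : ℕ) (lam : List ℕ) (t : Tab n lam) : Mlam n lam :=
  ∑ σ : Sym n, if σ ∈ colStab t then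
    (Equiv.Perm.sign σ : ℤ) • Finsupp.single (Quotient.mk (tabSetoid n lam) (t.trans σ)) 1
  else 0

/-- The map `ψ : ℤ𝒯(λ) → M^λ_ℤ`, `t ↦ e_t` (its image is the Specht module `S^λ_ℤ`). -/
noncomputable def psi (n : ℕ) (lam : List ℕ) : (Tab n lam →₀ ℤ) →ₗ[ℤ] Mlam n lam :=
  Finsupp.linearCombination ℤ (eTab n lam)

/-- Length of the `j`-th column of `[λ]`. -/
def colLen (lam : List ℕ) (j : ℕ) : ℕ := lam.countP (fun x => decide (j < x))

/-- Permutations of the cells supported on the finset `A`. -/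
def SymOn (lam : List ℕ) (A : Finset (Cell lam)) : Set (Equiv.Perm (Cell lam)) :=
  {g | ∀ c, c ∉ A → g c = c}

/-- The subgroup `Sym_X Sym_Y` (as a subset). -/
def prodXY (lam : List ℕ) (X Y : Finset (Cell lam)) : Set (Equiv.Perm (Cell lam)) :=
  {g | ∃ gx ∈ SymOn lam X, ∃ gy ∈ SymOn lam Y, g = gx * gy}

/-- `Δ` is a Garnir transversal: a left transversal of `Sym_X Sym_Y` in `Sym_{X ∪ Y}`,
where `X`, `Y` are nonempty subsets of columns `j < j'` with `|X| + |Y| > |C_j(λ)|`. -/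
def IsGarnir (lam : List ℕ) (X Y : Finset (Cell lam))
    (Δ : Finset (Equiv.Perm (Cell lam))) : Prop :=
  ∃ j j' : ℕ, j < j' ∧ X.Nonempty ∧ Y.Nonempty ∧
    (∀ c ∈ X, (c.2 : ℕ) = j) ∧ (∀ c ∈ Y, (c.2 : ℕ) = j') ∧
    colLen lam j < X.card + Y.card ∧
    (∀ γ ∈ Δ, γ ∈ SymOn lam (X ∪ Y)) ∧
    (∀ g ∈ SymOn lam (X ∪ Y), ∃! δ, δ ∈ Δ ∧ δ⁻¹ * g ∈ prodXY lam X Y)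

/-- The conjugate `t ∘ γ ∘ t⁻¹ ∈ Sym n` of a cell permutation `γ`. -/
def conjP (n : ℕ) (lam : List ℕ) (t : Tab n lam) (γ : Equiv.Perm (Cell lam)) : Sym n :=
  (t.symm.trans γ).trans t

/-- The Garnir element `G^t_Δ · t = ∑_{γ ∈ Δ_t} sgn(γ) (γ · t) ∈ ℤ𝒯(λ)`. -/
noncomputable def garnirElt (n : ℕ) (lam : List ℕ) (t : Tab n lam)
    (Δ : Finset (Equiv.Perm (Cell lam))) : Tab n lam →₀ ℤ :=
  ∑ γ ∈ Δ, (Equiv.Perm.sign (conjP n lam t γ) : ℤ) •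
    Finsupp.single (t.trans (conjP n lam t γ)) 1

/-- The set `G` of Garnir elements. -/
def GSet (n : ℕ) (lam : List ℕ) : Set (Tab n lam →₀ ℤ) :=
  {x | ∃ t : Tab n lam, ∃ X Y : Finset (Cell lam), ∃ Δ : Finset (Equiv.Perm (Cell lam)),
    IsGarnir lam X Y Δ ∧ x = garnirElt n lam t Δ}

/-- The set `H` of elements `π · t - sgn(π) t`, `π ∈ C_t`. -/
def HSet (n : ℕ) (lam : List ℕ) : Set (Tab n lam →₀ ℤ) :=
  {x | ∃ t : Tab n lam, ∃ π ∈ colStab t,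
    x = Finsupp.single (t.trans π) 1 - (Equiv.Perm.sign π : ℤ) • Finsupp.single t 1}


lemma units_val_mul_self (u : ℤˣ) : (u : ℤ) * u = 1 := by
  rw [← Units.val_mul, Int.units_mul_self, Units.val_one]

lemma sum_eq_sum_sum_mul_of_transversal {G M : Type*} [Group G] [DecidableEq G]
    [AddCommMonoid M] {K H D : Finset G} (hmul : ∀ d ∈ D, ∀ h ∈ H, d * h ∈ K)
    (huniq : ∀ g ∈ K, ∃! d, d ∈ D ∧ d⁻¹ * g ∈ H) (F : G → M) :
    ∑ g ∈ K, F g = ∑ d ∈ D, ∑ h ∈ H, F (d * h) := by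
  rw [← Finset.sum_product']
  refine (Finset.sum_bij (fun x _ => x.1 * x.2) (fun x hx => ?_) (fun x hx y hy hxy => ?_)
    (fun g hg => ?_) (fun _ _ => rfl)).symm
  · obtain ⟨hd, hh⟩ := Finset.mem_product.mp hx
    exact hmul _ hd _ hh
  · obtain ⟨hxd, hxh⟩ := Finset.mem_product.mp hx
    obtain ⟨hyd, hyh⟩ := Finset.mem_product.mp hy
    have h1 : x.1 = y.1 := (huniq _ (hmul _ hxd _ hxh)).unique ⟨hxd, by simpa using hxh⟩
      ⟨hyd, by simpa [hxy] using hyh⟩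
    exact Prod.ext h1 (by simpa [h1] using hxy)
  · obtain ⟨d, ⟨hd, hdg⟩, -⟩ := huniq g hg
    exact ⟨(d, d⁻¹ * g), Finset.mem_product.mpr ⟨hd, hdg⟩, by simp⟩

theorem induction_of_key_lt {α β : Type*} [Finite α] [Preorder β] (key : α → β)
    {P : α → Prop} (ih : ∀ a, (∀ b, key a < key b → P b) → P a) (a : α) : P a :=
  have : IsTrans α (fun b a => key a < key b) := ⟨fun _ _ _ h₁ h₂ => h₂.trans h₁⟩
  have : Std.Irrefl (fun b a : α => key a < key b) := ⟨fun _ => lt_irrefl _⟩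
  (Finite.wellFounded_of_trans_of_irrefl _).induction a ih

lemma sum_mul_lt_sum_perm_mul {α : Type*} [Fintype α] (σ : Perm α) (f w : α → ℤ) (v : ℤ)
    (hle : ∀ x, 0 ≤ (f (σ x) - f x) * (w x - v)) (hlt : ∃ x, 0 < (f (σ x) - f x) * (w x - v)) :
    ∑ x, f x * w x < ∑ x, f (σ x) * w x := by
  have hσ : ∑ x, f (σ x) = ∑ x, f x := Equiv.sum_comp σ f
  -- The coefficients `f (σ x) - f x` sum to zero, so shifting `w` by `v` changes nothing.
  have hdiff : ∑ x, f (σ x) * w x - ∑ x, f x * w x = ∑ x, (f (σ x) - f x) * (w x - v) := by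
    simp only [sub_mul, mul_sub, Finset.sum_sub_distrib, ← Finset.sum_mul, hσ]
    ring
  obtain ⟨x, hx⟩ := hlt
  have := Finset.sum_pos' (fun x _ => hle x) ⟨x, Finset.mem_univ x, hx⟩
  linarith

section Tableaux
variable {n : ℕ} {lam : List ℕ}

-- Stating facts about columns through `col c` rather than `(c.2 : ℕ)` keeps `simp` and `rw`
-- away from the dependent type of `c.2`.
def col (c : Cell lam) : ℕ := c.2

lemma col_lt_get (c : Cell lam) : col c < lam.get c.1 := c.2.isLt

lemma Cell.ext {c c' : Cell lam} (hrow : c.1 = c'.1) (hcol : col c = col c') : c = c' := by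
  obtain ⟨i, k⟩ := c
  obtain ⟨i', k'⟩ := c'
  cases hrow
  exact Sigma.ext rfl (heq_of_eq (Fin.ext hcol))

lemma trans_conjP (t : Tab n lam) (γ : Perm (Cell lam)) :
    t.trans (conjP n lam t γ) = γ.trans t := by
  ext c; simp [conjP]

lemma sign_conjP (t : Tab n lam) (γ : Perm (Cell lam)) :
    Perm.sign (conjP n lam t γ) = Perm.sign γ :=
  Perm.sign_permCongr t γ

-- Unlike `colStab t`, this cell-level column stabiliser does not depend on the tableau.
variable (lam) in
def columnPerms : Subgroup (Perm (Cell lam)) where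
  carrier := {p | ∀ c, col (p c) = col c}
  one_mem' _ := rfl
  mul_mem' hp hq c := (hp _).trans (hq c)
  inv_mem' {p} hp c := by simpa using (hp (p⁻¹ c)).symm

lemma mem_columnPerms {p : Perm (Cell lam)} :
    p ∈ columnPerms lam ↔ ∀ c, col (p c) = col c := Iff.rfl

lemma conjP_mem_colStab_iff (t : Tab n lam) (p : Perm (Cell lam)) :
    conjP n lam t p ∈ colStab t ↔ p ∈ columnPerms lam := by
  change (∀ a, col (t.symm (t (p (t.symm a)))) = col (t.symm a)) ↔ _
  simp only [Equiv.symm_apply_apply, mem_columnPerms]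
  exact ⟨fun h c => by simpa using h (t c), fun h a => h _⟩

def tabloid (t : Tab n lam) : Tabloid n lam := Quotient.mk (tabSetoid n lam) t

lemma tabloid_eq_tabloid_iff {t u : Tab n lam} :
    tabloid t = tabloid u ↔ ∀ a, (t.symm a).1 = (u.symm a).1 :=
  Quotient.eq (r := tabSetoid n lam)

lemma eTab_eq_sum_columnPerms (t : Tab n lam) :
    eTab n lam t = ∑ p : columnPerms lam, (Perm.sign (p : Perm (Cell lam)) : ℤ) •
      Finsupp.single (tabloid ((p : Perm (Cell lam)).trans t)) 1 := by
  rw [eTab, ← (t.permCongr).sum_comp, ← Finset.sum_filter]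
  refine (Finset.sum_subtype _ (fun p => ?_) _).trans (Finset.sum_congr rfl fun p _ => ?_)
  · simp only [Finset.mem_filter, Finset.mem_univ, true_and]
    exact conjP_mem_colStab_iff t p
  · rw [Perm.sign_permCongr]
    exact congrArg (fun u => _ • Finsupp.single (tabloid u) 1) (trans_conjP t p)

end Tableaux

section Polytabloids
variable {n : ℕ} {lam : List ℕ}

lemma eTab_perm_trans {p : Perm (Cell lam)} (hp : p ∈ columnPerms lam) (t : Tab n lam) :
    eTab n lam (p.trans t) = (Perm.sign p : ℤ) • eTab n lam t := by
  simp only [eTab_eq_sum_columnPerms, Finset.smul_sum, smul_smul]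
  refine Fintype.sum_equiv (Equiv.mulLeft ⟨p, hp⟩) _ _ fun q => ?_
  simp only [coe_mulLeft, Subgroup.coe_mul, map_mul, Units.val_mul, ← mul_assoc,
    units_val_mul_self, one_mul]
  rfl

lemma eTab_trans_of_mem_colStab (t : Tab n lam) {π : Sym n} (hπ : π ∈ colStab t) :
    eTab n lam (t.trans π) = (Perm.sign π : ℤ) • eTab n lam t := by
  obtain ⟨p, rfl⟩ := t.permCongr.surjective π
  have h := eTab_perm_trans ((conjP_mem_colStab_iff t p).mp hπ) t
  rwa [← trans_conjP, ← sign_conjP t] at h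

lemma psi_single (t : Tab n lam) : psi n lam (Finsupp.single t 1) = eTab n lam t := by
  rw [psi, Finsupp.linearCombination_single, one_smul]

lemma psi_eq_zero_of_mem_HSet {x : Tab n lam →₀ ℤ} (hx : x ∈ HSet n lam) : psi n lam x = 0 := by
  obtain ⟨t, π, hπ, rfl⟩ := hx
  rw [map_sub, map_smul, psi_single, psi_single, eTab_trans_of_mem_colStab t hπ, sub_self]

lemma single_perm_trans_sub_mem_HSet {p : Perm (Cell lam)} (hp : p ∈ columnPerms lam)
    (t : Tab n lam) :
    Finsupp.single (p.trans t) 1 - (Perm.sign p : ℤ) • Finsupp.single t 1 ∈ HSet n lam :=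
  ⟨t, conjP n lam t p, (conjP_mem_colStab_iff t p).mpr hp, by rw [trans_conjP, sign_conjP]⟩

end Polytabloids

section Garnir
variable {n : ℕ} {lam : List ℕ}

lemma colLen_eq_card (j : ℕ) :
    colLen lam j = (univ.filter fun r : Fin lam.length => j < lam.get r).card := by
  rw [colLen, ← Multiset.coe_countP]
  conv_lhs => rw [← List.ofFn_get lam, ← Fin.univ_val_map, Multiset.countP_map]
  rfl

lemma SymOn.one_mem (A : Finset (Cell lam)) : (1 : Perm (Cell lam)) ∈ SymOn lam A :=
  fun _ _ => rfl

lemma SymOn.mul_mem {A : Finset (Cell lam)} {g h : Perm (Cell lam)} (hg : g ∈ SymOn lam A)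
    (hh : h ∈ SymOn lam A) : g * h ∈ SymOn lam A := fun c hc => by
  rw [Perm.mul_apply, hh c hc, hg c hc]

lemma SymOn.inv_mem {A : Finset (Cell lam)} {g : Perm (Cell lam)} (hg : g ∈ SymOn lam A) :
    g⁻¹ ∈ SymOn lam A := fun c hc => by
  rw [Perm.inv_eq_iff_eq, hg c hc]

lemma SymOn.apply_mem {A : Finset (Cell lam)} {g : Perm (Cell lam)} (hg : g ∈ SymOn lam A)
    {c : Cell lam} (hc : c ∈ A) : g c ∈ A := by
  by_contra h
  exact h (by rwa [g.injective (hg _ h)])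

lemma SymOn.mono {A B : Finset (Cell lam)} (hAB : A ⊆ B) : SymOn lam A ⊆ SymOn lam B :=
  fun _ hg c hc => hg c fun h => hc (hAB h)

lemma SymOn.commute {X Y : Finset (Cell lam)} (hXY : Disjoint X Y) {g h : Perm (Cell lam)}
    (hg : g ∈ SymOn lam X) (hh : h ∈ SymOn lam Y) : Commute g h :=
  Perm.Disjoint.commute fun c =>
    if hc : c ∈ X then Or.inr (hh c (Finset.disjoint_left.mp hXY hc)) else Or.inl (hg c hc)

lemma SymOn.mem_columnPerms {A : Finset (Cell lam)} {j : ℕ} (hA : ∀ c ∈ A, col c = j)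
    {g : Perm (Cell lam)} (hg : g ∈ SymOn lam A) : g ∈ columnPerms lam := fun c => by
  by_cases hc : c ∈ A
  · rw [hA c hc, hA _ (SymOn.apply_mem hg hc)]
  · rw [hg c hc]

variable (lam) in
def prodXYSubgroup {X Y : Finset (Cell lam)} (hXY : Disjoint X Y) : Subgroup (Perm (Cell lam)) where
  carrier := prodXY lam X Y
  one_mem' := ⟨1, SymOn.one_mem X, 1, SymOn.one_mem Y, rfl⟩
  mul_mem' := by
    rintro _ _ ⟨a, ha, b, hb, rfl⟩ ⟨c, hc, d, hd, rfl⟩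
    refine ⟨a * c, SymOn.mul_mem ha hc, b * d, SymOn.mul_mem hb hd, ?_⟩
    rw [mul_assoc, ← mul_assoc b, ← (SymOn.commute hXY hc hb).eq]
    group
  inv_mem' := by
    rintro _ ⟨a, ha, b, hb, rfl⟩
    refine ⟨a⁻¹, SymOn.inv_mem ha, b⁻¹, SymOn.inv_mem hb, ?_⟩
    rw [mul_inv_rev]
    exact (SymOn.commute hXY (SymOn.inv_mem ha) (SymOn.inv_mem hb)).eq.symm

lemma exists_ne_row_eq_of_colLen_lt {p : Perm (Cell lam)} (hp : p ∈ columnPerms lam)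
    {A : Finset (Cell lam)} {j : ℕ} (hA : ∀ c ∈ A, j ≤ col c) (hcard : colLen lam j < A.card) :
    ∃ c₁ ∈ A, ∃ c₂ ∈ A, c₁ ≠ c₂ ∧ (p c₁).1 = (p c₂).1 := by
  rw [colLen_eq_card] at hcard
  refine Finset.exists_ne_map_eq_of_card_lt_of_maps_to hcard fun c hc => ?_
  have h := col_lt_get (p c)
  rw [hp c] at h
  simpa using (hA c hc).trans_lt h

lemma swap_apply_fst {a b : Cell lam} (hab : a.1 = b.1) (c : Cell lam) :
    (swap a b c).1 = c.1 := by
  rw [swap_apply_def]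
  split_ifs with h₁ h₂ <;> simp_all

lemma tabloid_mul_swap_trans {a b : Cell lam} (hab : a.1 = b.1) (g : Perm (Cell lam))
    (t : Tab n lam) : tabloid ((g * swap a b).trans t) = tabloid (g.trans t) :=
  tabloid_eq_tabloid_iff.mpr fun x => swap_apply_fst hab (g.symm (t.symm x))

-- Right multiplication by `swap c₁ c₂` is a sign-reversing involution fixing the tabloid.
lemma sum_symOn_sign_smul_tabloid_eq_zero (t : Tab n lam) {A : Finset (Cell lam)}
    (p : Perm (Cell lam)) {c₁ c₂ : Cell lam} (h₁ : c₁ ∈ A) (h₂ : c₂ ∈ A) (hne : c₁ ≠ c₂)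
    (hrow : (p⁻¹ c₁).1 = (p⁻¹ c₂).1) :
    ∑ g ∈ univ.filter (· ∈ SymOn lam A),
      (Perm.sign g : ℤ) • Finsupp.single (tabloid ((g * p).trans t)) (1 : ℤ) = 0 := by
  have hτ : swap c₁ c₂ ∈ SymOn lam A := fun c hc =>
    swap_apply_of_ne_of_ne (by rintro rfl; exact hc h₁) (by rintro rfl; exact hc h₂)
  refine Finset.sum_involution (fun g _ => g * swap c₁ c₂) (fun g _ => ?_) (fun g _ _ => ?_)
    (fun g hg => ?_) (fun g _ => ?_)
  · have h : g * swap c₁ c₂ * p = g * p * swap (p⁻¹ c₁) (p⁻¹ c₂) := by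
      rw [swap_apply_apply, inv_inv]; group
    rw [h, tabloid_mul_swap_trans hrow, map_mul, Perm.sign_swap hne]
    simp
  · simpa [swap_eq_one_iff] using hne
  · simp only [Finset.mem_filter, Finset.mem_univ, true_and] at hg ⊢
    exact SymOn.mul_mem hg hτ
  · simp [mul_assoc]

lemma prodXY_subset_symOn (X Y : Finset (Cell lam)) : prodXY lam X Y ⊆ SymOn lam (X ∪ Y) := by
  rintro _ ⟨a, ha, b, hb, rfl⟩
  exact SymOn.mul_mem (SymOn.mono Finset.subset_union_left ha)
    (SymOn.mono Finset.subset_union_right hb)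

lemma prodXY_subset_columnPerms {X Y : Finset (Cell lam)} {j j' : ℕ}
    (hX : ∀ c ∈ X, col c = j) (hY : ∀ c ∈ Y, col c = j') :
    prodXY lam X Y ⊆ columnPerms lam := by
  rintro _ ⟨a, ha, b, hb, rfl⟩
  exact mul_mem (SymOn.mem_columnPerms hX ha) (SymOn.mem_columnPerms hY hb)

lemma garnirElt_eq_sum (t : Tab n lam) (Δ : Finset (Perm (Cell lam))) :
    garnirElt n lam t Δ = ∑ γ ∈ Δ, (Perm.sign γ : ℤ) • Finsupp.single (γ.trans t) 1 := by
  simp only [garnirElt, sign_conjP, trans_conjP]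

-- Expanding `e_{g t}`, each inner sum vanishes: by pigeonhole two cells of `A` share a row.
lemma sum_symOn_sign_smul_eTab_eq_zero (t : Tab n lam) {A : Finset (Cell lam)} {j : ℕ}
    (hA : ∀ c ∈ A, j ≤ col c) (hcard : colLen lam j < A.card) :
    ∑ g ∈ univ.filter (· ∈ SymOn lam A), (Perm.sign g : ℤ) • eTab n lam (g.trans t) = 0 := by
  simp only [eTab_eq_sum_columnPerms, Finset.smul_sum]
  rw [Finset.sum_comm]
  refine Finset.sum_eq_zero fun p _ => ?_
  obtain ⟨c₁, h₁, c₂, h₂, hne, hrow⟩ := exists_ne_row_eq_of_colLen_lt (inv_mem p.2) hA hcard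
  rw [← smul_zero (Perm.sign (p : Perm (Cell lam)) : ℤ),
    ← sum_symOn_sign_smul_tabloid_eq_zero t p h₁ h₂ hne hrow, Finset.smul_sum]
  refine Finset.sum_congr rfl fun g _ => ?_
  rw [smul_comm]
  rfl

-- Summing `sgn g • e_{g t}` over `Sym_{X ∪ Y}` gives `|Sym_X Sym_Y|` times the image of the
-- Garnir element.
lemma psi_garnirElt_eq_zero (t : Tab n lam) {X Y : Finset (Cell lam)}
    {Δ : Finset (Perm (Cell lam))} (hΔ : IsGarnir lam X Y Δ) :
    psi n lam (garnirElt n lam t Δ) = 0 := by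
  obtain ⟨j, j', hjj, -, -, hX, hY, hcard, hΔS, hΔ⟩ := hΔ
  have hXY : Disjoint X Y := Finset.disjoint_left.mpr fun c hcX hcY =>
    hjj.ne ((hX c hcX).symm.trans (hY c hcY))
  have hA : ∀ c ∈ X ∪ Y, j ≤ col c := fun c hc => by
    rcases Finset.mem_union.mp hc with h | h
    · exact (hX c h).ge
    · exact (hY c h).ge.trans' hjj.le
  set P := univ.filter (· ∈ prodXY lam X Y)
  set F : Perm (Cell lam) → Mlam n lam := fun g => (Perm.sign g : ℤ) • eTab n lam (g.trans t)
  have hFP : ∀ g, ∀ q ∈ P, F (g * q) = F g := fun g q hq => by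
    have hq := prodXY_subset_columnPerms hX hY (Finset.mem_filter.mp hq).2
    simp only [F]
    rw [show (g * q).trans t = q.trans (g.trans t) from rfl, eTab_perm_trans hq, smul_smul,
      map_mul, Units.val_mul, mul_assoc, units_val_mul_self, mul_one]
  have hsum : ∑ g ∈ univ.filter (· ∈ SymOn lam (X ∪ Y)), F g =
      P.card • psi n lam (garnirElt n lam t Δ) := by
    rw [sum_eq_sum_sum_mul_of_transversal (D := Δ) (H := P)]
    · rw [Finset.sum_congr rfl fun d _ => Finset.sum_congr rfl fun q hq => hFP d q hq]
      simp only [Finset.sum_const, garnirElt_eq_sum, map_sum, map_smul, psi_single,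
        Finset.smul_sum, F]
    · intro d hd q hq
      simpa using SymOn.mul_mem (hΔS d hd) (prodXY_subset_symOn X Y (Finset.mem_filter.mp hq).2)
    · intro g hg
      simpa [P] using hΔ g (Finset.mem_filter.mp hg).2
  rw [sum_symOn_sign_smul_eTab_eq_zero t hA (by rwa [Finset.card_union_of_disjoint hXY])] at hsum
  refine (smul_eq_zero.mp hsum.symm).resolve_left (Finset.card_ne_zero.mpr ⟨1, ?_⟩)
  exact Finset.mem_filter.mpr ⟨Finset.mem_univ _, 1, SymOn.one_mem X, 1, SymOn.one_mem Y, rfl⟩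

end Garnir

section Straightening
variable {n : ℕ} {lam : List ℕ}

def weight (f : Cell lam → ℤ) (u : Tab n lam) : ℤ := ∑ c, f c * (u c : ℕ)

lemma weight_perm_trans (f : Cell lam → ℤ) (γ : Perm (Cell lam)) (u : Tab n lam) :
    weight f (γ.trans u) = ∑ c, f (γ⁻¹ c) * (u c : ℕ) := by
  rw [weight, ← Equiv.sum_comp γ (fun c => f (γ⁻¹ c) * ((u c : ℕ) : ℤ))]
  simp

lemma weight_perm_trans_eq_self {f : Cell lam → ℤ} {γ : Perm (Cell lam)} (hγ : ∀ c, f (γ c) = f c)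
    (u : Tab n lam) : weight f (γ.trans u) = weight f u := by
  rw [weight_perm_trans, weight]
  congr! 2 with c
  simpa using (hγ (γ⁻¹ c)).symm

lemma weight_lt_weight_swap_trans {f : Cell lam → ℤ} {u : Tab n lam} {c c' : Cell lam}
    (hf : f c < f c') (hu : u c' < u c) : weight f u < weight f ((swap c c').trans u) := by
  have hne : c ≠ c' := by rintro rfl; exact lt_irrefl _ hf
  rw [weight_perm_trans, swap_inv, weight]
  refine sum_mul_lt_sum_perm_mul _ _ _ (u c' : ℕ) (fun x => ?_) ⟨c, ?_⟩
  · rcases eq_or_ne x c with rfl | hxc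
    · rw [swap_apply_left]
      exact mul_nonneg (by linarith) (by simp [hu.le])
    rcases eq_or_ne x c' with rfl | hxc'
    · simp
    · simp [swap_apply_of_ne_of_ne hxc hxc']
  · rw [swap_apply_left]
    exact mul_pos (by linarith) (by simpa using hu)

lemma card_filter_col_eq (j : ℕ) (P : Fin lam.length → Prop) [DecidablePred P] :
    (univ.filter fun c : Cell lam => col c = j ∧ P c.1).card =
      (univ.filter fun r => P r ∧ j < lam.get r).card := by
  refine Finset.card_bij (fun c _ => c.1) (fun c hc => ?_) (fun c hc c' hc' h => ?_)
    (fun r hr => ?_)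
  · simp only [Finset.mem_filter, Finset.mem_univ, true_and] at hc ⊢
    exact ⟨hc.2, hc.1 ▸ col_lt_get c⟩
  · simp only [Finset.mem_filter, Finset.mem_univ, true_and] at hc hc'
    exact Cell.ext h (hc.1.trans hc'.1.symm)
  · simp only [Finset.mem_filter, Finset.mem_univ, true_and] at hr
    exact ⟨⟨r, ⟨j, hr.2⟩⟩, Finset.mem_filter.mpr ⟨Finset.mem_univ _, rfl, hr.1⟩, rfl⟩

-- As `lam` is sorted, every row `≤ c₀.1` reaches column `col c₁`.
lemma colLen_lt_card_add_card (hsort : lam.Pairwise (· ≥ ·)) {c₀ c₁ : Cell lam}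
    (hrow : c₀.1 = c₁.1) :
    colLen lam (col c₀) < (univ.filter fun c => col c = col c₀ ∧ c₀.1 ≤ c.1).card +
      (univ.filter fun c => col c = col c₁ ∧ c.1 ≤ c₀.1).card := by
  rw [card_filter_col_eq _ (c₀.1 ≤ ·), card_filter_col_eq _ (· ≤ c₀.1), colLen_eq_card]
  have hY : (univ.filter fun r => r ≤ c₀.1 ∧ col c₁ < lam.get r) = Finset.Iic c₀.1 := by
    ext r
    simp only [Finset.mem_filter, Finset.mem_univ, true_and, Finset.mem_Iic, and_iff_left_iff_imp]
    exact fun hr => (col_lt_get c₁).trans_le (hrow ▸ hsort.rel_get_of_le hr)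
  have hX : (univ.filter (fun r => col c₀ < lam.get r)).filter (fun r => ¬ r < c₀.1) =
      univ.filter fun r => c₀.1 ≤ r ∧ col c₀ < lam.get r := by
    ext r
    simp [and_comm]
  have hlow : ((univ.filter (fun r => col c₀ < lam.get r)).filter (· < c₀.1)).card ≤ c₀.1 :=
    (Finset.card_le_card fun r hr => by simpa using (Finset.mem_filter.mp hr).2).trans
      (Fin.card_Iio c₀.1).le
  have := Finset.card_filter_add_card_filter_not (s := univ.filter (fun r => col c₀ < lam.get r))
    (p := (· < c₀.1))
  rw [hY, Fin.card_Iic, ← hX]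
  omega

lemma mem_prodXY_of_mapsTo {X Y : Finset (Cell lam)} {g : Perm (Cell lam)}
    (hg : g ∈ SymOn lam (X ∪ Y)) (hX : ∀ c ∈ X, g c ∈ X) : g ∈ prodXY lam X Y := by
  set gX := Perm.ofSubtype (g.subtypePermOfFintype (p := (· ∈ X)) hX)
  have hgX : gX ∈ SymOn lam X := fun c hc => Perm.ofSubtype_apply_of_not_mem _ hc
  refine ⟨gX, hgX, gX⁻¹ * g, fun c hc => ?_, by group⟩
  rw [Perm.mul_apply, Perm.inv_eq_iff_eq]
  by_cases hcX : c ∈ X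
  · simp [gX, Perm.ofSubtype_apply_of_mem _ hcX]
  · rw [hg c (by simp [hcX, hc]), hgX c hcX]

lemma exists_garnir_transversal {X Y : Finset (Cell lam)} (hXY : Disjoint X Y) :
    ∃ Δ : Finset (Perm (Cell lam)), (∀ γ ∈ Δ, γ ∈ SymOn lam (X ∪ Y)) ∧
      (∀ g ∈ SymOn lam (X ∪ Y), ∃! δ, δ ∈ Δ ∧ δ⁻¹ * g ∈ prodXY lam X Y) ∧ 1 ∈ Δ := by
  obtain ⟨T, hT, hT1⟩ := (prodXYSubgroup lam hXY).exists_isComplement_left 1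
  refine ⟨univ.filter (fun g => g ∈ T ∧ g ∈ SymOn lam (X ∪ Y)),
    fun γ hγ => (Finset.mem_filter.mp hγ).2.2, fun g hg => ?_,
    Finset.mem_filter.mpr ⟨Finset.mem_univ _, hT1, SymOn.one_mem _⟩⟩
  obtain ⟨⟨δ, hδT⟩, hδ, huniq⟩ := Subgroup.isComplement_iff_existsUnique_inv_mul_mem.mp hT g
  refine ⟨δ, ⟨Finset.mem_filter.mpr ⟨Finset.mem_univ _, hδT, ?_⟩, hδ⟩, ?_⟩
  · rw [show δ = g * (δ⁻¹ * g)⁻¹ by group]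
    exact SymOn.mul_mem hg (SymOn.inv_mem (prodXY_subset_symOn X Y hδ))
  · rintro δ' ⟨hδ', hδ'g⟩
    exact congrArg Subtype.val (huniq ⟨δ', (Finset.mem_filter.mp hδ').2.1⟩ hδ'g)

def IsColumnStrict (t : Tab n lam) : Prop :=
  ∀ c c' : Cell lam, col c = col c' → c.1 < c'.1 → t c < t c'

lemma weight_col_lt_of_notMem_prodXY {u : Tab n lam} {X Y : Finset (Cell lam)} {j j' : ℕ}
    (hjj : j < j') (hX : ∀ c ∈ X, col c = j) (hY : ∀ c ∈ Y, col c = j') {v : Fin n}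
    (hXv : ∀ c ∈ X, v < u c) (hYv : ∀ c ∈ Y, u c ≤ v) {γ : Perm (Cell lam)}
    (hγ : γ ∈ SymOn lam (X ∪ Y)) (hγP : γ ∉ prodXY lam X Y) :
    weight (fun c => (col c : ℤ)) u < weight (fun c => (col c : ℤ)) (γ.trans u) := by
  have hXY : Disjoint X Y := Finset.disjoint_left.mpr fun c hcX hcY =>
    hjj.ne ((hX c hcX).symm.trans (hY c hcY))
  have hγ' := SymOn.inv_mem hγ
  have hcol : ∀ c ∈ X ∪ Y, j ≤ col (γ⁻¹ c) ∧ col (γ⁻¹ c) ≤ j' := fun c hc => by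
    rcases Finset.mem_union.mp (SymOn.apply_mem hγ' hc) with h | h
    · rw [hX _ h]; exact ⟨le_rfl, hjj.le⟩
    · rw [hY _ h]; exact ⟨hjj.le, le_rfl⟩
  obtain ⟨x, hxX, hxY⟩ : ∃ x ∈ X, γ⁻¹ x ∈ Y := by
    by_contra! h
    refine hγP (inv_inv γ ▸ (prodXYSubgroup lam hXY).inv_mem
      (mem_prodXY_of_mapsTo hγ' fun c hc => ?_))
    have := SymOn.apply_mem hγ' (Finset.mem_union_left Y hc)
    exact (Finset.mem_union.mp this).resolve_right (h c hc)
  rw [weight_perm_trans, weight]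
  refine sum_mul_lt_sum_perm_mul γ⁻¹ _ _ (v : ℕ) (fun c => ?_) ⟨x, ?_⟩
  · by_cases hc : c ∈ X ∪ Y
    · have := hcol c hc
      rcases Finset.mem_union.mp hc with h | h
      · have := hXv c h
        have := hX c h
        exact mul_nonneg (by omega) (by omega)
      · have := hYv c h
        have := hY c h
        exact mul_nonneg_of_nonpos_of_nonpos (by omega) (by omega)
    · simp [hγ' c hc]
  · have := hXv x hxX
    exact mul_pos (by rw [hY _ hxY, hX _ hxX]; omega) (by omega)

lemma exists_garnir_of_row_descent (hsort : lam.Pairwise (· ≥ ·)) {u : Tab n lam}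
    (hcs : IsColumnStrict u) {c₀ c₁ : Cell lam} (hrow : c₀.1 = c₁.1) (hcol : col c₀ < col c₁)
    (hu : u c₁ < u c₀) :
    ∃ X Y Δ, IsGarnir lam X Y Δ ∧ 1 ∈ Δ ∧ ∀ δ ∈ Δ, δ ≠ 1 →
      weight (fun c => (col c : ℤ)) u < weight (fun c => (col c : ℤ)) (δ.trans u) := by
  set X := univ.filter fun c => col c = col c₀ ∧ c₀.1 ≤ c.1
  set Y := univ.filter fun c => col c = col c₁ ∧ c.1 ≤ c₀.1
  have hX : ∀ c ∈ X, col c = col c₀ := fun c hc => (Finset.mem_filter.mp hc).2.1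
  have hY : ∀ c ∈ Y, col c = col c₁ := fun c hc => (Finset.mem_filter.mp hc).2.1
  have hXY : Disjoint X Y := Finset.disjoint_left.mpr fun c hcX hcY =>
    hcol.ne ((hX c hcX).symm.trans (hY c hcY))
  have hXv : ∀ c ∈ X, u c₁ < u c := fun c hc => by
    obtain ⟨-, hc₀, hle⟩ := Finset.mem_filter.mp hc
    rcases hle.eq_or_lt with h | h
    · rwa [Cell.ext h.symm hc₀]
    · exact hu.trans (hcs c₀ c hc₀.symm h)
  have hYv : ∀ c ∈ Y, u c ≤ u c₁ := fun c hc => by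
    obtain ⟨-, hc₁, hle⟩ := Finset.mem_filter.mp hc
    rcases hle.eq_or_lt with h | h
    · rw [Cell.ext (h.trans hrow) hc₁]
    · exact (hcs c c₁ hc₁ (h.trans_eq hrow)).le
  obtain ⟨Δ, hΔS, hΔ, hΔ1⟩ := exists_garnir_transversal hXY
  refine ⟨X, Y, Δ, ⟨col c₀, col c₁, hcol, ⟨c₀, by simp [X]⟩, ⟨c₁, by simp [Y, hrow]⟩, hX, hY,
    colLen_lt_card_add_card hsort hrow, hΔS, hΔ⟩, hΔ1, fun δ hδ hδ1 => ?_⟩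
  refine weight_col_lt_of_notMem_prodXY hcol hX hY hXv hYv (hΔS δ hδ) fun hδP => hδ1 ?_
  refine (hΔ δ (hΔS δ hδ)).unique ⟨hδ, ?_⟩ ⟨hΔ1, by simpa using hδP⟩
  rw [inv_mul_cancel]
  exact (prodXYSubgroup lam hXY).one_mem

-- Garnir steps increase the first component; column swaps fix it and increase the second.
def straighteningKey (u : Tab n lam) : ℤ ×ₗ ℤ :=
  toLex (weight (fun c => (col c : ℤ)) u, weight (fun c => ((c.1 : ℕ) : ℤ)) u)

lemma swap_mem_columnPerms {c c' : Cell lam} (h : col c = col c') :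
    swap c c' ∈ columnPerms lam := fun d => by
  rw [swap_apply_def]
  split_ifs <;> subst_vars <;> simp [h]

lemma exists_column_descent {u : Tab n lam} (h : ¬ IsColumnStrict u) :
    ∃ c c' : Cell lam, col c = col c' ∧ c.1 < c'.1 ∧ u c' < u c := by
  simp only [IsColumnStrict, not_forall, not_lt] at h
  obtain ⟨c, c', hcol, hrow, hu⟩ := h
  exact ⟨c, c', hcol, hrow, hu.lt_of_ne (u.injective.ne (by rintro rfl; simp at hrow))⟩

lemma exists_row_descent {u : Tab n lam} (hcs : IsColumnStrict u) (h : ¬ IsStd u) :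
    ∃ c₀ c₁ : Cell lam, c₀.1 = c₁.1 ∧ col c₀ < col c₁ ∧ u c₁ < u c₀ := by
  have hrs : ¬ ∀ c c' : Cell lam, c.1 = c'.1 → col c < col c' → u c < u c' :=
    fun hrs => h ⟨hrs, hcs⟩
  push Not at hrs
  obtain ⟨c₀, c₁, hrow, hcol, hu⟩ := hrs
  exact ⟨c₀, c₁, hrow, hcol, hu.lt_of_ne (u.injective.ne (by rintro rfl; omega)).symm⟩

theorem span_relations_sup_supported_isStd_eq_top (hsort : lam.Pairwise (· ≥ ·)) :
    Submodule.span ℤ (GSet n lam ∪ HSet n lam) ⊔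
      Finsupp.supported ℤ ℤ {t : Tab n lam | IsStd t} = ⊤ := by
  set M := Submodule.span ℤ (GSet n lam ∪ HSet n lam) ⊔
    Finsupp.supported ℤ ℤ {t : Tab n lam | IsStd t}
  suffices h : ∀ u, Finsupp.single u 1 ∈ M by
    rw [eq_top_iff, ← Finsupp.supported_univ, Finsupp.supported_eq_span_single,
      Submodule.span_le]
    rintro _ ⟨u, -, rfl⟩
    exact h u
  refine induction_of_key_lt straighteningKey fun u ih => ?_
  by_cases hstd : IsStd u
  · exact Submodule.mem_sup_right (Finsupp.single_mem_supported ℤ 1 hstd)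
  by_cases hcs : IsColumnStrict u
  · obtain ⟨c₀, c₁, hrow, hcol, hu⟩ := exists_row_descent hcs hstd
    obtain ⟨X, Y, Δ, hG, hΔ1, hlt⟩ := exists_garnir_of_row_descent hsort hcs hrow hcol hu
    have hGmem : garnirElt n lam u Δ ∈ M :=
      Submodule.mem_sup_left (Submodule.subset_span (Or.inl ⟨u, X, Y, Δ, hG, rfl⟩))
    rw [garnirElt_eq_sum, ← Finset.add_sum_erase _ _ hΔ1, map_one, Units.val_one, one_smul,
      show (1 : Perm (Cell lam)).trans u = u from rfl] at hGmem
    refine (Submodule.add_mem_iff_left _ (Submodule.sum_mem _ fun δ hδ => ?_)).mp hGmem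
    obtain ⟨hδ1, hδ⟩ := Finset.mem_erase.mp hδ
    exact Submodule.smul_mem _ _ (ih _ (Prod.Lex.toLex_lt_toLex.mpr (Or.inl (hlt δ hδ hδ1))))
  · obtain ⟨c, c', hcol, hrow, hu⟩ := exists_column_descent hcs
    have hp := swap_mem_columnPerms hcol
    have hH := single_perm_trans_sub_mem_HSet hp u
    rw [Perm.sign_swap (by rintro rfl; simp at hrow)] at hH
    have hkey : straighteningKey u < straighteningKey ((swap c c').trans u) :=
      Prod.Lex.toLex_lt_toLex.mpr (Or.inr
        ⟨(weight_perm_trans_eq_self (fun d => congrArg Nat.cast (hp d)) u).symm,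
          weight_lt_weight_swap_trans (by simpa using hrow) hu⟩)
    convert M.sub_mem (Submodule.mem_sup_left (Submodule.subset_span (Or.inr hH))) (ih _ hkey)
      using 1
    simp

end Straightening

section Independence
variable {n : ℕ} {lam : List ℕ}

def rowKey (t : Tab n lam) : Lex (Fin n → Fin lam.length) := toLex fun a => (t.symm a).1

lemma tabloid_eq_tabloid_iff_rowKey {t u : Tab n lam} :
    tabloid t = tabloid u ↔ rowKey t = rowKey u := by
  rw [tabloid_eq_tabloid_iff, rowKey, rowKey, toLex_inj, funext_iff]

-- By column-strictness, the smallest entry moved by `p` moves down its column.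
lemma rowKey_lt_rowKey_perm_trans {t : Tab n lam} (hcs : IsColumnStrict t)
    {p : Perm (Cell lam)} (hp : p ∈ columnPerms lam) (hp1 : p ≠ 1) :
    rowKey t < rowKey (p.trans t) := by
  set s := univ.filter fun a => p⁻¹ (t.symm a) ≠ t.symm a
  have hs : s.Nonempty := by
    by_contra! h
    refine hp1 (inv_eq_one.mp (Equiv.ext fun c => ?_))
    simpa [s] using Finset.eq_empty_iff_forall_notMem.mp h (t c)
  set a₀ := s.min' hs
  set c := t.symm a₀
  have hc' : p⁻¹ c ≠ c := (Finset.mem_filter.mp (s.min'_mem hs)).2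
  have hmoved : t (p⁻¹ c) ∈ s := by
    refine Finset.mem_filter.mpr ⟨Finset.mem_univ _, fun h => hc' ?_⟩
    rw [symm_apply_apply] at h
    simpa using congrArg p h
  have hlt : a₀ < t (p⁻¹ c) := (s.min'_le _ hmoved).lt_of_ne fun h => by
    have : c = p⁻¹ c := by rw [← t.symm_apply_apply (p⁻¹ c), ← h]
    exact hc' this.symm
  have hcol : col (p⁻¹ c) = col c := (inv_mem hp) c
  have hrow : c.1 < (p⁻¹ c).1 := by
    rcases lt_trichotomy c.1 (p⁻¹ c).1 with h | h | h
    · exact h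
    · exact absurd (Cell.ext h.symm hcol) hc'
    · have := hcs _ _ hcol h
      rw [apply_symm_apply] at this
      exact absurd hlt (not_lt.mpr this.le)
  refine ⟨a₀, fun a ha => ?_, hrow⟩
  have : a ∉ s := fun h => not_lt.mpr (s.min'_le a h) ha
  simp only [s, Finset.mem_filter, Finset.mem_univ, true_and, not_not] at this
  show (t.symm a).1 = ((p.trans t).symm a).1
  rw [symm_trans_apply]
  exact congrArg Sigma.fst this.symm

lemma eTab_apply (t : Tab n lam) (Q : Tabloid n lam) :
    eTab n lam t Q = ∑ p : columnPerms lam,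
      if tabloid ((p : Perm (Cell lam)).trans t) = Q then (Perm.sign (p : Perm (Cell lam)) : ℤ)
      else 0 := by
  simp [eTab_eq_sum_columnPerms, Finsupp.finsetSum_apply, Finsupp.single_apply]

lemma eTab_apply_tabloid_self {t : Tab n lam} (hcs : IsColumnStrict t) :
    eTab n lam t (tabloid t) = 1 := by
  rw [eTab_apply, Finset.sum_eq_single 1 (fun p _ hp1 => if_neg fun h => ?_) (by simp)]
  · have h1 : (1 : Perm (Cell lam)).trans t = t := Equiv.refl_trans t
    simp [h1]
  · refine (rowKey_lt_rowKey_perm_trans hcs p.2 (by simpa using hp1)).ne' ?_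
    exact tabloid_eq_tabloid_iff_rowKey.mp h

lemma rowKey_le_of_eTab_apply_ne_zero {t u : Tab n lam} (hcs : IsColumnStrict t)
    (h : eTab n lam t (tabloid u) ≠ 0) : rowKey t ≤ rowKey u := by
  rw [eTab_apply] at h
  obtain ⟨p, -, hp⟩ := Finset.exists_ne_zero_of_sum_ne_zero h
  rw [ite_ne_right_iff, tabloid_eq_tabloid_iff_rowKey] at hp
  rw [← hp.1]
  by_cases hp1 : (p : Perm (Cell lam)) = 1
  · rw [hp1]; rfl
  · exact (rowKey_lt_rowKey_perm_trans hcs p.2 hp1).le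

-- Each row of a standard tableau lists the entries of that row of its tabloid in increasing order.
lemma eq_of_isStd_of_tabloid_eq {t u : Tab n lam} (ht : IsStd t) (hu : IsStd u)
    (h : tabloid t = tabloid u) : t = u := by
  have hrange (v : Tab n lam) (r : Fin lam.length) :
      Set.range (fun k : Fin (lam.get r) => v ⟨r, k⟩) = {a | (v.symm a).1 = r} := by
    ext a
    refine ⟨by rintro ⟨k, rfl⟩; simp, fun ha => ⟨Fin.cast (congrArg lam.get ha) (v.symm a).2, ?_⟩⟩
    have hc : (⟨r, Fin.cast (congrArg lam.get ha) (v.symm a).2⟩ : Cell lam) = v.symm a :=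
      Cell.ext ha.symm rfl
    exact (congrArg v hc).trans (apply_symm_apply v a)
  have hrow (r : Fin lam.length) : (fun k : Fin (lam.get r) => t ⟨r, k⟩) = fun k => u ⟨r, k⟩ := by
    refine (StrictMono.range_inj (fun k k' hk => ht.1 ⟨r, k⟩ ⟨r, k'⟩ rfl hk)
      (fun k k' hk => hu.1 ⟨r, k⟩ ⟨r, k'⟩ rfl hk)).mp ?_
    rw [hrange, hrange]
    simp only [tabloid_eq_tabloid_iff.mp h]
  ext ⟨r, k⟩
  exact congrArg Fin.val (congrFun (hrow r) k)

-- In the image of a combination of standard tableaux, the coefficient of the tabloid with least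
-- `rowKey` is the coefficient of the corresponding tableau.
theorem linearIndepOn_eTab_isStd : LinearIndepOn ℤ (eTab n lam) {t : Tab n lam | IsStd t} := by
  refine linearIndepOn_iff.mpr fun l hl hl0 => ?_
  by_contra hne
  obtain ⟨t₀, ht₀, hmin⟩ :=
    l.support.exists_min_image rowKey (Finsupp.support_nonempty_iff.mpr hne)
  have hstd : ∀ t ∈ l.support, IsStd t := fun t ht => hl ht
  have happly : Finsupp.linearCombination ℤ (eTab n lam) l (tabloid t₀) = l t₀ := by
    rw [Finsupp.linearCombination_apply, Finsupp.sum, Finsupp.finsetSum_apply,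
      Finset.sum_eq_single t₀ (fun t ht htt₀ => ?_) (fun h => absurd ht₀ h)]
    · simp [eTab_apply_tabloid_self (hstd t₀ ht₀).2]
    · rw [Finsupp.smul_apply, smul_eq_mul, mul_eq_zero]
      refine Or.inr (by_contra fun h => htt₀ (eq_of_isStd_of_tabloid_eq (hstd t ht) (hstd t₀ ht₀)
        (tabloid_eq_tabloid_iff_rowKey.mpr ?_)))
      exact
        ((rowKey_le_of_eTab_apply_ne_zero (hstd t ht).2 h).antisymm (hmin t ht))
  rw [hl0] at happly
  exact Finsupp.mem_support_iff.mp ht₀ happly.symm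

end Independence

/-- **Presentation of the integral Specht module.** The map `ψ : ℤ𝒯(λ) → M^λ_ℤ`,
`t ↦ e_t`, has image the Specht module `S^λ_ℤ` (the span of the polytabloids), and its
kernel is generated as a `ℤ`-module by the Garnir elements `G^t_Δ · t` together with the
elements `π · t - sgn(π) t` for `π ∈ C_t`. -/
theorem specht_presentation (n : ℕ) (lam : List ℕ) (hl : IsPartition n lam) :
    LinearMap.range (psi n lam) = Submodule.span ℤ (Set.range (eTab n lam)) ∧
    LinearMap.ker (psi n lam) = Submodule.span ℤ (GSet n lam ∪ HSet n lam) := by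
  have hrel : Submodule.span ℤ (GSet n lam ∪ HSet n lam) ≤ LinearMap.ker (psi n lam) := by
    rw [Submodule.span_le]
    rintro x (⟨t, X, Y, Δ, hΔ, rfl⟩ | hx)
    · exact psi_garnirElt_eq_zero t hΔ
    · exact psi_eq_zero_of_mem_HSet hx
  have hindep : Disjoint (Finsupp.supported ℤ ℤ {t | IsStd t}) (LinearMap.ker (psi n lam)) :=
    linearIndepOn_iff_disjoint.mp linearIndepOn_eTab_isStd
  refine ⟨Finsupp.range_linearCombination ℤ, ?_⟩
  calc LinearMap.ker (psi n lam)
      = (Submodule.span ℤ (GSet n lam ∪ HSet n lam) ⊔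
          Finsupp.supported ℤ ℤ {t | IsStd t}) ⊓ LinearMap.ker (psi n lam) := by
        rw [span_relations_sup_supported_isStd_eq_top hl.1, top_inf_eq]
    _ = Submodule.span ℤ (GSet n lam ∪ HSet n lam) := by
        rw [sup_inf_assoc_of_le _ hrel, hindep.eq_bot, sup_bot_eq]

end SignedYoung
end
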